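/- arXiv:2212.12398 — 12 statements merged into one kernel-verified Lean document; each statement's English description precedes it below -/
import Mathlib

section
/- Fix an anchor supply y_a > 0, static parameters θ̄ ∈ [0,1) (with θ := 1 − θ̄), ᾱ > 0, x̄_U ∈ [0,∞], and a redemption level x ∈ [0, y_a). Suppose b_a and b_a′ satisfy θ̄·y_a < b_a < b_a′ < y_a and that the resulting reserve ratios satisfy 1 > r(x; b_a) > θ̄ and 1 > r(x; b_a′) > θ̄, where for each anchor reserve value the dynamic parameters α, x_U, x_L are chosen by the selection rule. Then b(x; b_a) < b(x; b_a′); i.e., the reserve value at redemption level x is strictly increasing in the anchor reserve value at all non-trivial points. -/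
/- P-AMM redemption curve with the selection rule for dynamic parameters.
   Static parameters: `θbar` (target reserve ratio floor), `αbar` (lower bound
   on the decay slope), `xbarU : EReal` (upper bound on `x_U`, possibly `∞`). -/

noncomputable section

namespace PAMM

/-- The unconstrained minimal slope `α̂`. -/
def alphaHat (θbar ba ya : ℝ) : ℝ :=
  if (1 + θbar) / 2 ≤ ba / ya then 2 * (1 - ba / ya) / ya
  else (1 - θbar) ^ 2 / (2 * (ba - θbar * ya))

/-- The selected slope `α := max(ᾱ, α̂)`. -/
def alphaSel (θbar αbar ba ya : ℝ) : ℝ := max αbar (alphaHat θbar ba ya)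

/-- The unconstrained maximal upper cutoff `x̂_U` for slope `α`. -/
def xUHat (θbar α ba ya : ℝ) : ℝ :=
  if α * (ya - ba) ≤ (1 - θbar) ^ 2 / 2 then ya - Real.sqrt (2 * (ya - ba) / α)
  else ya - (ya - ba) / (1 - θbar) - (1 - θbar) / (2 * α)

/-- The selected upper cutoff `x_U := min(x̄_U, x̂_U)` (where `x̄_U ∈ [0,∞]`). -/
def xUSel (θbar αbar : ℝ) (xbarU : EReal) (ba ya : ℝ) : ℝ :=
  (min xbarU ((xUHat θbar (alphaSel θbar αbar ba ya) ba ya : ℝ) : EReal)).toReal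

/-- The lower cutoff `x_L`. -/
def xLSel (θbar αbar : ℝ) (xbarU : EReal) (ba ya : ℝ) : ℝ :=
  ya - Real.sqrt ((ya - xUSel θbar αbar xbarU ba ya) ^ 2
    - 2 * (ya - ba) / alphaSel θbar αbar ba ya)

/-- The three-piece marginal redemption price curve. -/
def priceCurve (α xU xL x : ℝ) : ℝ :=
  if x ≤ xU then 1 else if x ≤ xL then 1 - α * (x - xU) else 1 - α * (xL - xU)

/-- The reserve value `b(x; b_a, y_a) = b_a − ∫₀ˣ p(t; b_a, y_a) dt` where the dynamic
    parameters are chosen by the selection rule for the anchor point `(b_a, y_a)`. -/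
def reserveB (θbar αbar : ℝ) (xbarU : EReal) (ba ya x : ℝ) : ℝ :=
  ba - ∫ t in (0:ℝ)..x,
    priceCurve (alphaSel θbar αbar ba ya) (xUSel θbar αbar xbarU ba ya)
      (xLSel θbar αbar xbarU ba ya) t


/-!
The reserve curve `x ↦ b(x)` is convex with slopes `-p ∈ [-1, -(1 - w₁)]`, where
`w₁ = α (x_L - x_U) = 1 - r_L`, so it is the upper envelope of its supporting lines
`x ↦ (1 - w) (y_a - x) - φ(w)`, `0 ≤ w ≤ w₁`, where
`φ(w) = Δ_a - w (y_a - x_U) + w² / (2α)`. The selection rule makes the reserve run out exactly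
at `y_a`, so `φ(w₁) = 0` and `φ ≥ 0` on `[0, w₁]`. Let `w` index the line supporting
`b(·; b_a)` at `x`; then `r(x; b_a) > θ̄` forces `w < θ`.
If `w ≤ w₁'`, the line of the same slope for `b_a'` lies strictly higher, because `φ(w)`
strictly decreases when `b_a` increases: `α` decreases, and `y_a - x̂_U` is given by one of two
formulas, each making `φ` monotone in `(α, Δ_a)`, which agree on the boundary
`α Δ_a = θ² / 2`. If `w > w₁'`, then
`b(x; b_a') ≥ (1 - w₁') (y_a - x) > (1 - w) (y_a - x) ≥ b(x; b_a)`.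
-/

section Curve
variable {α xU xL x ba ya w : ℝ}

lemma priceCurve_eq_clamp (h : xU ≤ xL) :
    priceCurve α xU xL = fun t => 1 - α * (min (max t xU) xL - xU) := by
  funext t
  unfold priceCurve
  rcases le_or_gt t xU with h1 | h1
  · rw [if_pos h1, max_eq_right h1, min_eq_left h]; ring
  · rw [if_neg h1.not_ge, max_eq_left h1.le]
    rcases le_or_gt t xL with h2 | h2
    · rw [if_pos h2, min_eq_left h2]
    · rw [if_neg h2.not_ge, min_eq_right h2.le]

lemma integral_priceCurve (hxU : 0 ≤ xU) (hUL : xU ≤ xL) :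
    ∫ t in (0:ℝ)..x, priceCurve α xU xL t =
      if x ≤ xU then x
      else if x ≤ xL then x - α * (x - xU) ^ 2 / 2
      else xL - α * (xL - xU) ^ 2 / 2 + (1 - α * (xL - xU)) * (x - xL) := by
  rw [priceCurve_eq_clamp hUL]
  set f : ℝ → ℝ := fun t => 1 - α * (min (max t xU) xL - xU)
  have hint (a b : ℝ) : IntervalIntegrable f MeasureTheory.volume a b :=
    Continuous.intervalIntegrable (by fun_prop) a b
  have flat (b : ℝ) (hb : b ≤ xU) : ∫ t in (0:ℝ)..b, f t = b := by
    rw [intervalIntegral.integral_congr (g := fun _ => (1:ℝ))]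
    · simp
    · intro t ht
      have htU : t ≤ xU := ht.2.trans (max_le hxU hb)
      simp only [f, max_eq_right htU, min_eq_left hUL, sub_self, mul_zero, sub_zero]
  have ramp (b : ℝ) (hb : xU ≤ b) (hbL : b ≤ xL) :
      ∫ t in xU..b, f t = (b - xU) - α * (b - xU) ^ 2 / 2 := by
    rw [intervalIntegral.integral_congr (g := fun t => 1 - α * (t - xU))]
    · rw [intervalIntegral.integral_comp_sub_right (fun t => 1 - α * t),
        intervalIntegral.integral_sub intervalIntegrable_const
          ((intervalIntegral.intervalIntegrable_id).const_mul α),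
        intervalIntegral.integral_const_mul, integral_id]
      simp
      ring
    · intro t ht
      rw [Set.uIcc_of_le hb] at ht
      simp only [f, max_eq_left ht.1, min_eq_left (ht.2.trans hbL)]
  have floor (b : ℝ) (hb : xL ≤ b) :
      ∫ t in xL..b, f t = (1 - α * (xL - xU)) * (b - xL) := by
    rw [intervalIntegral.integral_congr (g := fun _ => 1 - α * (xL - xU))]
    · simp only [intervalIntegral.integral_const, smul_eq_mul]
      ring
    · intro t ht
      rw [Set.uIcc_of_le hb] at ht
      simp only [f, max_eq_left (hUL.trans ht.1), min_eq_right ht.1]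
  rw [← intervalIntegral.integral_add_adjacent_intervals (hint 0 xU) (hint xU x)]
  split_ifs with h1 h2
  · rw [intervalIntegral.integral_add_adjacent_intervals (hint 0 xU) (hint xU x), flat x h1]
  · rw [flat xU le_rfl, ramp x (le_of_not_ge h1) h2]
    ring
  · rw [← intervalIntegral.integral_add_adjacent_intervals (hint xU xL) (hint xL x),
      flat xU le_rfl, ramp xL hUL le_rfl, floor x (le_of_not_ge h2)]
    ring

/-- The supporting line of slope `-(1 - w)` of the convex reserve curve `x ↦ ba - ∫₀ˣ p`
takes the value `-dualIntercept α xU ba ya w` at `x = ya`. -/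
def dualIntercept (α xU ba ya w : ℝ) : ℝ := ya - ba - w * (ya - xU) + w ^ 2 / (2 * α)

lemma tangent_le_reserve (hα : 0 < α) (hxU : 0 ≤ xU) (hUL : xU ≤ xL)
    (hw0 : 0 ≤ w) (hwW : w ≤ α * (xL - xU)) :
    (1 - w) * (ya - x) - dualIntercept α xU ba ya w
      ≤ ba - ∫ t in (0:ℝ)..x, priceCurve α xU xL t := by
  rw [integral_priceCurve hxU hUL, ← sub_nonneg]
  unfold dualIntercept
  split_ifs with h1 h2
  · have : 0 ≤ w ^ 2 / (2 * α) := by positivity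
    nlinarith [mul_nonneg hw0 (sub_nonneg.2 h1)]
  · refine (by positivity : 0 ≤ (w - α * (x - xU)) ^ 2 / (2 * α)).trans_eq ?_
    field_simp
    ring
  · have h3 : 0 ≤ 2 * α * (x - xL) + α * (xL - xU) - w := by nlinarith
    refine (div_nonneg (mul_nonneg (sub_nonneg.2 hwW) h3) (by positivity : 0 ≤ 2 * α)).trans_eq
      ?_
    field_simp
    ring

lemma exists_tangent_eq_reserve (hα : 0 < α) (hxU : 0 ≤ xU) (hUL : xU ≤ xL) :
    ∃ w, 0 ≤ w ∧ w ≤ α * (xL - xU) ∧ ba - ∫ t in (0:ℝ)..x, priceCurve α xU xL t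
      = (1 - w) * (ya - x) - dualIntercept α xU ba ya w := by
  rw [integral_priceCurve hxU hUL]
  unfold dualIntercept
  split_ifs with h1 h2
  · exact ⟨0, le_rfl, by nlinarith, by ring⟩
  · refine ⟨α * (x - xU), by nlinarith, by nlinarith, ?_⟩
    field_simp
    ring
  · refine ⟨α * (xL - xU), by nlinarith, le_rfl, ?_⟩
    field_simp
    ring

end Curve

structure Admissible (α xU xL ba ya : ℝ) : Prop where
  pos : 0 < α
  xU_nonneg : 0 ≤ xU
  xU_le_xL : xU ≤ xL
  xL_le : xL ≤ ya
  /-- Equivalently, the reserve `ba - ∫₀ˣ p` is used up exactly at `x = ya`. -/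
  exhausts : α * ((ya - xU) ^ 2 - (ya - xL) ^ 2) = 2 * (ya - ba)

namespace Admissible
variable {α xU xL ba ya w : ℝ}

lemma of_sq_le (hα : 0 < α) (hxU : 0 ≤ xU) (hxUya : xU ≤ ya) (hba : ba ≤ ya)
    (h : 2 * (ya - ba) / α ≤ (ya - xU) ^ 2) :
    Admissible α xU (ya - √((ya - xU) ^ 2 - 2 * (ya - ba) / α)) ba ya where
  pos := hα
  xU_nonneg := hxU
  xU_le_xL := by
    have := Real.sqrt_le_sqrt (sub_le_self ((ya - xU) ^ 2)
      (div_nonneg (by linarith) hα.le : 0 ≤ 2 * (ya - ba) / α))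
    rw [Real.sqrt_sq (sub_nonneg.2 hxUya)] at this
    linarith
  xL_le := by
    have := Real.sqrt_nonneg ((ya - xU) ^ 2 - 2 * (ya - ba) / α)
    linarith
  exhausts := by
    rw [sub_sub_cancel, Real.sq_sqrt (sub_nonneg.2 h)]
    field_simp
    ring

/-- Its smaller root `α (x_L - x_U)` is the total price drop `1 - r_L`. -/
lemma dualIntercept_eq (h : Admissible α xU xL ba ya) :
    dualIntercept α xU ba ya w
      = (α * (xL - xU) - w) * (α * ((ya - xU) + (ya - xL)) - w) / (2 * α) := by
  have := h.pos
  unfold dualIntercept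
  field_simp
  linear_combination (-α) * h.exhausts

lemma dualIntercept_drop (h : Admissible α xU xL ba ya) :
    dualIntercept α xU ba ya (α * (xL - xU)) = 0 := by
  simp [h.dualIntercept_eq]

lemma dualIntercept_nonneg (h : Admissible α xU xL ba ya) (hw : w ≤ α * (xL - xU)) :
    0 ≤ dualIntercept α xU ba ya w := by
  have := h.pos
  have := h.xL_le
  rw [h.dualIntercept_eq]
  exact div_nonneg (mul_nonneg (by linarith) (by nlinarith)) (by positivity)

lemma drop_sq_le (h : Admissible α xU xL ba ya) :
    (α * (xL - xU)) ^ 2 ≤ 2 * α * (ya - ba) := by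
  have := h.pos
  nlinarith [h.exhausts, mul_nonneg (mul_nonneg (sq_nonneg α) (sub_nonneg.2 h.xU_le_xL))
    (sub_nonneg.2 h.xL_le)]

end Admissible

section Hat
variable {θ a a' D D' w : ℝ}

/-- `ya - x̂_U` in terms of `θ = 1 - θ̄`, the slope `a` and the gap `D = ya - ba`. -/
def uHat (θ a D : ℝ) : ℝ :=
  if a * D ≤ θ ^ 2 / 2 then √(2 * D / a) else D / θ + θ / (2 * a)

lemma uHat_of_ge (hθ : 0 < θ) (ha : 0 < a) (h : θ ^ 2 / 2 ≤ a * D) :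
    uHat θ a D = D / θ + θ / (2 * a) := by
  unfold uHat
  split_ifs with h'
  · obtain rfl : D = θ ^ 2 / (2 * a) := by field_simp; linarith
    rw [show 2 * (θ ^ 2 / (2 * a)) / a = (θ / a) ^ 2 by field_simp, Real.sqrt_sq (by positivity)]
    field_simp
    ring
  · rfl

lemma uHat_pos (hθ : 0 < θ) (ha : 0 < a) (hD : 0 < D) : 0 < uHat θ a D := by
  unfold uHat
  split_ifs
  · positivity
  · positivity

lemma div_le_sq_uHat (hθ : 0 < θ) (ha : 0 < a) (hD : 0 ≤ D) :
    2 * D / a ≤ uHat θ a D ^ 2 := by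
  unfold uHat
  split_ifs
  · rw [Real.sq_sqrt (by positivity)]
  · have hprod : D / θ * (θ / (2 * a)) = D / (2 * a) := by field_simp
    have h4 : 2 * D / a = 4 * (D / (2 * a)) := by ring
    nlinarith [sq_nonneg (D / θ - θ / (2 * a))]

lemma uHat_anti (hθ : 0 < θ) (ha' : 0 < a') (haa : a' ≤ a) (hD : 0 < D) :
    uHat θ a D ≤ uHat θ a' D := by
  have ha : 0 < a := ha'.trans_le haa
  have sqrt_anti {b b' : ℝ} (hb' : 0 < b') (hbb : b' ≤ b) :
      √(2 * D / b) ≤ √(2 * D / b') :=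
    Real.sqrt_le_sqrt (div_le_div_of_nonneg_left (by positivity) hb' hbb)
  have linear_anti {b b' : ℝ} (hb' : 0 < b') (hbb : b' ≤ b) :
      D / θ + θ / (2 * b) ≤ D / θ + θ / (2 * b') := by
    gcongr
  rcases le_or_gt (a * D) (θ ^ 2 / 2) with h | h
  · have h' : a' * D ≤ θ ^ 2 / 2 := by nlinarith
    simp only [uHat, if_pos h, if_pos h']
    exact sqrt_anti ha' haa
  rw [uHat_of_ge hθ ha h.le]
  rcases le_or_gt (θ ^ 2 / 2) (a' * D) with h' | h'
  · rw [uHat_of_ge hθ ha' h']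
    exact linear_anti ha' haa
  -- pass through the slope `a₀` at which the two branches meet
  rw [uHat, if_pos h'.le]
  set a₀ := θ ^ 2 / (2 * D) with ha₀
  have hbd : a₀ * D = θ ^ 2 / 2 := by rw [ha₀]; field_simp
  calc D / θ + θ / (2 * a) ≤ D / θ + θ / (2 * a₀) :=
        linear_anti (by positivity) (by rw [div_le_iff₀ (by positivity)]; linarith)
    _ = √(2 * D / a₀) := by rw [← uHat_of_ge hθ (by positivity) hbd.ge, uHat, if_pos hbd.le]
    _ ≤ √(2 * D / a') := sqrt_anti ha' (by rw [le_div_iff₀ (by positivity)]; linarith)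

/-- `dualIntercept` at the upper cutoff `x̂_U`, in terms of `D = ya - ba`. -/
def interceptHat (θ a D w : ℝ) : ℝ := D - w * uHat θ a D + w ^ 2 / (2 * a)

lemma interceptHat_of_le (ha : 0 < a) (hD : 0 ≤ D) (h : a * D ≤ θ ^ 2 / 2) :
    interceptHat θ a D w = (√D - w / √(2 * a)) ^ 2 := by
  have hprod : √(2 * D / a) * √(2 * a) = 2 * √D := by
    rw [← Real.sqrt_mul (by positivity), show 2 * D / a * (2 * a) = 2 ^ 2 * D by field_simp,
      Real.sqrt_mul (by positivity), Real.sqrt_sq (by norm_num)]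
  have hsq : √(2 * a) ^ 2 = 2 * a := Real.sq_sqrt (by positivity)
  simp only [interceptHat, uHat, if_pos h]
  rw [show √(2 * D / a) = 2 * √D / √(2 * a) by field_simp; linarith, sub_sq, div_pow, hsq,
    Real.sq_sqrt hD]
  field_simp

lemma interceptHat_of_ge (hθ : 0 < θ) (ha : 0 < a) (h : θ ^ 2 / 2 ≤ a * D) :
    interceptHat θ a D w = (1 - w / θ) * D - w * (θ - w) / (2 * a) := by
  rw [interceptHat, uHat_of_ge hθ ha h]
  field_simp
  ring

lemma div_sqrt_le_sqrt (ha : 0 < a) (hw : w ^ 2 ≤ 2 * a * D) : w / √(2 * a) ≤ √D := by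
  rw [div_le_iff₀ (Real.sqrt_pos.2 (by positivity)), ← Real.sqrt_mul' _ (by positivity)]
  exact Real.le_sqrt_of_sq_le (by linarith)

lemma interceptHat_le_of_sqrt_branch (ha' : 0 < a') (haa : a' ≤ a) (hD' : 0 ≤ D')
    (hDD : D' ≤ D) (h : a * D ≤ θ ^ 2 / 2) (hw0 : 0 ≤ w) (hw : w ^ 2 ≤ 2 * a' * D') :
    interceptHat θ a' D' w ≤ interceptHat θ a D w := by
  have ha : 0 < a := ha'.trans_le haa
  rw [interceptHat_of_le ha' hD' (by nlinarith), interceptHat_of_le ha (hD'.trans hDD) h]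
  have : w / √(2 * a) ≤ w / √(2 * a') := div_le_div_of_nonneg_left hw0
    (Real.sqrt_pos.2 (by positivity)) (Real.sqrt_le_sqrt (by linarith))
  have : √D' ≤ √D := Real.sqrt_le_sqrt hDD
  gcongr ?_ ^ 2
  · exact sub_nonneg.2 (div_sqrt_le_sqrt ha' hw)
  · linarith

lemma interceptHat_lt_of_sqrt_branch (ha' : 0 < a') (haa : a' ≤ a) (hD' : 0 ≤ D')
    (hDD : D' < D) (h : a * D ≤ θ ^ 2 / 2) (hw0 : 0 ≤ w) (hw : w ^ 2 ≤ 2 * a' * D') :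
    interceptHat θ a' D' w < interceptHat θ a D w := by
  have ha : 0 < a := ha'.trans_le haa
  rw [interceptHat_of_le ha' hD' (by nlinarith), interceptHat_of_le ha (hD'.trans hDD.le) h]
  have : w / √(2 * a) ≤ w / √(2 * a') := div_le_div_of_nonneg_left hw0
    (Real.sqrt_pos.2 (by positivity)) (Real.sqrt_le_sqrt (by linarith))
  have : √D' < √D := Real.sqrt_lt_sqrt hD' hDD
  gcongr ?_ ^ 2
  · exact sub_nonneg.2 (div_sqrt_le_sqrt ha' hw)
  · linarith

lemma interceptHat_lt_of_linear_branch (hθ : 0 < θ) (ha' : 0 < a') (haa : a' ≤ a)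
    (hDD : D' < D) (h : θ ^ 2 / 2 ≤ a' * D') (hw0 : 0 ≤ w) (hwθ : w < θ) :
    interceptHat θ a' D' w < interceptHat θ a D w := by
  have ha : 0 < a := ha'.trans_le haa
  have hD' : 0 ≤ D' := by nlinarith [sq_nonneg θ]
  have h' : θ ^ 2 / 2 ≤ a * D := h.trans (mul_le_mul haa hDD.le hD' ha.le)
  rw [interceptHat_of_ge hθ ha' h, interceptHat_of_ge hθ ha h']
  have : 0 < 1 - w / θ := by rw [sub_pos, div_lt_one hθ]; exact hwθ
  have : w * (θ - w) / (2 * a) ≤ w * (θ - w) / (2 * a') :=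
    div_le_div_of_nonneg_left (mul_nonneg hw0 (by linarith)) (by positivity) (by linarith)
  nlinarith

theorem interceptHat_lt (hθ : 0 < θ) (ha' : 0 < a') (haa : a' ≤ a) (hD' : 0 < D')
    (hDD : D' < D) (hw0 : 0 ≤ w) (hwθ : w < θ) (hw : w ^ 2 ≤ 2 * a' * D') :
    interceptHat θ a' D' w < interceptHat θ a D w := by
  have ha : 0 < a := ha'.trans_le haa
  rcases le_or_gt (a * D) (θ ^ 2 / 2) with h | h
  · exact interceptHat_lt_of_sqrt_branch ha' haa hD'.le hDD h hw0 hw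
  rcases le_or_gt (θ ^ 2 / 2) (a' * D') with h' | h'
  · exact interceptHat_lt_of_linear_branch hθ ha' haa hDD h' hw0 hwθ
  -- cross the boundary `a * D = θ ^ 2 / 2` between the two branches
  rcases le_or_gt (a * D') (θ ^ 2 / 2) with h₀ | h₀
  · set D₀ := θ ^ 2 / (2 * a) with hD₀
    have hbd : a * D₀ = θ ^ 2 / 2 := by rw [hD₀]; field_simp
    have hD₀ : D' ≤ D₀ := by rw [le_div_iff₀ (by positivity)]; linarith
    exact (interceptHat_le_of_sqrt_branch ha' haa hD'.le hD₀ hbd.le hw0 hw).trans_lt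
      (interceptHat_lt_of_linear_branch hθ ha le_rfl
        (by rw [div_lt_iff₀ (by positivity)]; linarith) hbd.ge hw0 hwθ)
  · set a₀ := θ ^ 2 / (2 * D') with ha₀
    have hbd : a₀ * D' = θ ^ 2 / 2 := by rw [ha₀]; field_simp
    have ha₀ : a' ≤ a₀ := by rw [le_div_iff₀ (by positivity)]; linarith
    exact (interceptHat_le_of_sqrt_branch ha' ha₀ hD'.le le_rfl hbd.le hw0 hw).trans_lt
      (interceptHat_lt_of_linear_branch hθ (by positivity)
        (by rw [div_le_iff₀ (by positivity)]; linarith) hDD hbd.ge hw0 hwθ)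

end Hat

section Selection
variable {θbar αbar a ba ba' ya : ℝ} {xbarU : EReal}

lemma xUHat_eq : xUHat θbar a ba ya = ya - uHat (1 - θbar) a (ya - ba) := by
  unfold xUHat uHat
  split_ifs <;> ring

lemma alphaHat_eq (hya : 0 < ya) :
    alphaHat θbar ba ya = if (1 + θbar) * ya ≤ 2 * ba then 2 * (ya - ba) / ya ^ 2
      else (1 - θbar) ^ 2 / (2 * (ba - θbar * ya)) := by
  have hcond : (1 + θbar) / 2 ≤ ba / ya ↔ (1 + θbar) * ya ≤ 2 * ba := by
    rw [div_le_div_iff₀ two_pos hya, mul_comm 2]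
  rw [alphaHat, if_congr hcond rfl rfl, show 2 * (1 - ba / ya) / ya = 2 * (ya - ba) / ya ^ 2 by
    field_simp]

lemma alphaHat_pos (hθ1 : θbar < 1) (hya : 0 < ya) (hba0 : θbar * ya < ba) (hbaya : ba < ya) :
    0 < alphaHat θbar ba ya := by
  have : 0 < 1 - θbar := by linarith
  rw [alphaHat_eq hya]
  split_ifs
  · exact div_pos (by linarith) (by positivity)
  · exact div_pos (by positivity) (by linarith)

lemma alphaHat_anti (hya : 0 < ya) (hba0 : θbar * ya < ba) (hbb : ba ≤ ba')
    (hba'ya : ba' < ya) : alphaHat θbar ba' ya ≤ alphaHat θbar ba ya := by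
  rw [alphaHat_eq hya, alphaHat_eq hya]
  have hd : 0 < ba - θbar * ya := by linarith
  split_ifs with h h' h'
  · gcongr
  · rw [div_le_div_iff₀ (by positivity) (by positivity)]
    nlinarith
  · exact absurd (h'.trans (by linarith)) h
  · gcongr

lemma uHat_alphaHat (hθ1 : θbar < 1) (hya : 0 < ya) (hba0 : θbar * ya < ba) (hbaya : ba < ya) :
    uHat (1 - θbar) (alphaHat θbar ba ya) (ya - ba) = ya := by
  have hθ : 0 < 1 - θbar := by linarith
  have hd : 0 < ba - θbar * ya := by linarith
  have hΔ : 0 < ya - ba := by linarith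
  rw [alphaHat_eq hya]
  split_ifs with h
  · rw [uHat, if_pos, show 2 * (ya - ba) / (2 * (ya - ba) / ya ^ 2) = ya ^ 2 by field_simp,
      Real.sqrt_sq hya.le]
    rw [div_mul_eq_mul_div, div_le_div_iff₀ (by positivity) two_pos]
    nlinarith
  · rw [uHat_of_ge hθ (by positivity)]
    · field_simp
      ring
    · rw [div_mul_eq_mul_div, div_le_div_iff₀ two_pos (by positivity)]
      nlinarith [mul_pos (mul_pos hθ hθ) hΔ]

lemma xUHat_nonneg (hθ1 : θbar < 1) (hya : 0 < ya) (hba0 : θbar * ya < ba) (hbaya : ba < ya)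
    (ha : alphaHat θbar ba ya ≤ a) : 0 ≤ xUHat θbar a ba ya := by
  rw [xUHat_eq, sub_nonneg]
  calc uHat (1 - θbar) a (ya - ba) ≤ uHat (1 - θbar) (alphaHat θbar ba ya) (ya - ba) :=
        uHat_anti (by linarith) (alphaHat_pos hθ1 hya hba0 hbaya) ha (by linarith)
    _ = ya := uHat_alphaHat hθ1 hya hba0 hbaya

lemma alphaSel_pos (hαbar : 0 < αbar) : 0 < alphaSel θbar αbar ba ya :=
  hαbar.trans_le (le_max_left _ _)

lemma xUSel_le_xUHat (hxbarU : 0 ≤ xbarU) :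
    xUSel θbar αbar xbarU ba ya ≤ xUHat θbar (alphaSel θbar αbar ba ya) ba ya := by
  unfold xUSel
  rcases le_total xbarU (xUHat θbar (alphaSel θbar αbar ba ya) ba ya) with h | h
  · rw [min_eq_left h]
    simpa using EReal.toReal_le_toReal h (ne_bot_of_le_ne_bot EReal.zero_ne_bot hxbarU)
      (EReal.coe_ne_top _)
  · rw [min_eq_right h, EReal.toReal_coe]

lemma xUSel_nonneg (hθ1 : θbar < 1) (hxbarU : 0 ≤ xbarU) (hya : 0 < ya)
    (hba0 : θbar * ya < ba) (hbaya : ba < ya) : 0 ≤ xUSel θbar αbar xbarU ba ya := by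
  have hxU := xUHat_nonneg hθ1 hya hba0 hbaya (le_max_right αbar _)
  unfold xUSel
  exact EReal.toReal_nonneg (le_min hxbarU (EReal.coe_nonneg.2 hxU))

lemma admissible_sel (hθ1 : θbar < 1) (hαbar : 0 < αbar) (hxbarU : 0 ≤ xbarU) (hya : 0 < ya)
    (hba0 : θbar * ya < ba) (hbaya : ba < ya) :
    Admissible (alphaSel θbar αbar ba ya) (xUSel θbar αbar xbarU ba ya)
      (xLSel θbar αbar xbarU ba ya) ba ya := by
  have hα := alphaSel_pos (θbar := θbar) (ba := ba) (ya := ya) hαbar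
  have hxU : xUSel θbar αbar xbarU ba ya
      ≤ ya - uHat (1 - θbar) (alphaSel θbar αbar ba ya) (ya - ba) :=
    xUHat_eq (a := alphaSel θbar αbar ba ya) ▸ xUSel_le_xUHat hxbarU
  have hu := uHat_pos (θ := 1 - θbar) (by linarith) hα (show 0 < ya - ba by linarith)
  have hsq := div_le_sq_uHat (θ := 1 - θbar) (by linarith) hα (show 0 ≤ ya - ba by linarith)
  refine Admissible.of_sq_le hα (xUSel_nonneg hθ1 hxbarU hya hba0 hbaya) (by linarith)
    hbaya.le (hsq.trans ?_)
  gcongr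
  linarith

lemma alphaHat_le_of_lt_xUHat (hθ1 : θbar < 1) (hxbarU : 0 ≤ xbarU) (hya : 0 < ya)
    (hba0 : θbar * ya < ba) (hbaya : ba < ya)
    (h : xbarU < xUHat θbar (alphaSel θbar αbar ba ya) ba ya) :
    alphaHat θbar ba ya ≤ αbar := by
  by_contra! hα
  rw [alphaSel, max_eq_right hα.le, xUHat_eq, uHat_alphaHat hθ1 hya hba0 hbaya, sub_self] at h
  exact h.not_ge hxbarU

lemma dualIntercept_sel_lt (hθ1 : θbar < 1) (hαbar : 0 < αbar) (hxbarU : 0 ≤ xbarU)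
    (hya : 0 < ya) (hba0 : θbar * ya < ba) (hbab : ba < ba') (hba'ya : ba' < ya) {w : ℝ}
    (hw0 : 0 ≤ w) (hwθ : w < 1 - θbar)
    (hw : w ≤ alphaSel θbar αbar ba' ya *
      (xLSel θbar αbar xbarU ba' ya - xUSel θbar αbar xbarU ba' ya)) :
    dualIntercept (alphaSel θbar αbar ba' ya) (xUSel θbar αbar xbarU ba' ya) ba' ya w
      < dualIntercept (alphaSel θbar αbar ba ya) (xUSel θbar αbar xbarU ba ya) ba ya w := by
  set α := alphaSel θbar αbar ba ya
  set α' := alphaSel θbar αbar ba' ya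
  have hαα : α' ≤ α := max_le_max le_rfl (alphaHat_anti hya hba0 hbab.le hba'ya)
  have hxU' : xUSel θbar αbar xbarU ba' ya ≤ xUHat θbar α' ba' ya := xUSel_le_xUHat hxbarU
  rcases le_or_gt (xUHat θbar α ba ya : EReal) xbarU with hfree | hclamp
  · have hxU : xUSel θbar αbar xbarU ba ya = xUHat θbar α ba ya := by
      rw [xUSel, min_eq_right hfree, EReal.toReal_coe]
    have hA' := admissible_sel hθ1 hαbar hxbarU hya (hba0.trans hbab) hba'ya
    calc dualIntercept α' (xUSel θbar αbar xbarU ba' ya) ba' ya w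
        ≤ dualIntercept α' (xUHat θbar α' ba' ya) ba' ya w := by
          unfold dualIntercept; nlinarith
      _ = interceptHat (1 - θbar) α' (ya - ba') w := by
          rw [dualIntercept, interceptHat, xUHat_eq]; ring
      _ < interceptHat (1 - θbar) α (ya - ba) w :=
          interceptHat_lt (by linarith) (alphaSel_pos hαbar) hαα (by linarith) (by linarith)
            hw0 hwθ ((pow_le_pow_left₀ hw0 hw 2).trans hA'.drop_sq_le)
      _ = dualIntercept α (xUSel θbar αbar xbarU ba ya) ba ya w := by
          rw [dualIntercept, interceptHat, hxU, xUHat_eq]; ring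
  · -- `x_U` is clamped by `x̄_U`, which forces `α̂ ≤ ᾱ`: both anchors use the slope `ᾱ`
    have hαhat := alphaHat_le_of_lt_xUHat hθ1 hxbarU hya hba0 (hbab.trans hba'ya) hclamp
    have hα : α = αbar := max_eq_left hαhat
    have hα' : α' = αbar := max_eq_left ((alphaHat_anti hya hba0 hbab.le hba'ya).trans hαhat)
    have hxU : xUSel θbar αbar xbarU ba ya = xbarU.toReal := by
      rw [xUSel, min_eq_left hclamp.le]
    have hxU'' : xUSel θbar αbar xbarU ba' ya ≤ xbarU.toReal :=
      EReal.toReal_le_toReal (min_le_left _ _)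
        (by simpa using ne_bot_of_le_ne_bot EReal.zero_ne_bot hxbarU)
        (hclamp.trans (EReal.coe_lt_top _)).ne
    rw [hα, hα', hxU]
    unfold dualIntercept
    nlinarith

end Selection

theorem reserve_strictMono_in_anchor_general
    (θbar αbar ya x ba ba' : ℝ) (xbarU : EReal)
    (hθ1 : θbar < 1) (hαbar : 0 < αbar) (hxbarU : 0 ≤ xbarU)
    (hya : 0 < ya) (hxya : x < ya)
    (hba0 : θbar * ya < ba) (hbab : ba < ba') (hba'ya : ba' < ya)
    (hr2 : θbar < reserveB θbar αbar xbarU ba ya x / (ya - x)) :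
    reserveB θbar αbar xbarU ba ya x < reserveB θbar αbar xbarU ba' ya x := by
  have hA := admissible_sel hθ1 hαbar hxbarU hya hba0 (hbab.trans hba'ya)
  have hA' := admissible_sel hθ1 hαbar hxbarU hya (hba0.trans hbab) hba'ya
  unfold reserveB at hr2 ⊢
  obtain ⟨w, hw0, hwW, hb⟩ :=
    exists_tangent_eq_reserve (x := x) (ba := ba) (ya := ya) hA.pos hA.xU_nonneg hA.xU_le_xL
  have hφ := hA.dualIntercept_nonneg hwW
  have hwθ : w < 1 - θbar := by
    rw [lt_div_iff₀ (by linarith), hb] at hr2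
    nlinarith
  rcases le_or_gt w (alphaSel θbar αbar ba' ya *
    (xLSel θbar αbar xbarU ba' ya - xUSel θbar αbar xbarU ba' ya)) with hw' | hw'
  · have := dualIntercept_sel_lt hθ1 hαbar hxbarU hya hba0 hbab hba'ya hw0 hwθ hw'
    have := tangent_le_reserve (x := x) (ba := ba') (ya := ya) hA'.pos hA'.xU_nonneg
      hA'.xU_le_xL hw0 hw'
    linarith
  · have := tangent_le_reserve (x := x) (ba := ba') (ya := ya) hA'.pos hA'.xU_nonneg
      hA'.xU_le_xL (mul_nonneg hA'.pos.le (sub_nonneg.2 hA'.xU_le_xL)) le_rfl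
    rw [hA'.dualIntercept_drop] at this
    nlinarith

/-- Theorem `thm:mon-b0`: at any non-trivial point, the reserve value
    `b(x; b_a)` is strictly increasing in the anchor reserve value `b_a`. -/
theorem reserve_strictMono_in_anchor
    (θbar αbar ya x ba ba' : ℝ) (xbarU : EReal)
    (hθ0 : 0 ≤ θbar) (hθ1 : θbar < 1) (hαbar : 0 < αbar) (hxbarU : 0 ≤ xbarU)
    (hya : 0 < ya) (hx0 : 0 ≤ x) (hxya : x < ya)
    (hba0 : θbar * ya < ba) (hbab : ba < ba') (hba'ya : ba' < ya)
    (hr1 : reserveB θbar αbar xbarU ba ya x / (ya - x) < 1)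
    (hr2 : θbar < reserveB θbar αbar xbarU ba ya x / (ya - x))
    (hr1' : reserveB θbar αbar xbarU ba' ya x / (ya - x) < 1)
    (hr2' : θbar < reserveB θbar αbar xbarU ba' ya x / (ya - x)) :
    reserveB θbar αbar xbarU ba ya x < reserveB θbar αbar xbarU ba' ya x :=
  reserve_strictMono_in_anchor_general θbar αbar ya x ba ba' xbarU hθ1 hαbar hxbarU hya hxya hba0
    hbab hba'ya hr2

end PAMM
end
end

section
/- Let ρ : ℝ × ℝ × ℝ → ℝ be continuous and Lipschitz in its last two arguments, so that the initial value problem b′(x) = −ρ(x, b(x), y(x)), y′(x) = −1 has a unique solution forward from any initial condition. Fix a state S₀ = (x₀, b₀, y₀) and, for Z > 0, define the result of redeeming Z at a state (x*, b*, y*) as the state (x* + Z, B(x* + Z), y* − Z) together with the payout b* − B(x* + Z), where (B, Y) is the unique solution of the system with B(x*) = b*, Y(x*) = y*. Let X, Y > 0 with X + Y ≤ y₀; let S_X, P_X result from redeeming X at S₀, let S_{X,Y}, P_{X,Y} result from redeeming Y at S_X, and let S_{X+Y}, P_{X+Y} result from redeeming X + Y at S₀. Then (1) P_X + P_{X,Y}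 = P_{X+Y} and (2) S_{X,Y} = S_{X+Y} (path independence of redemptions). -/
/-!
Path independence is the flow property of the P-AMM system. Its vector field
`(t, b, y) ↦ (-ρ (t, b, y), -1)` is Lipschitz in the state, so by Grönwall forward solutions are
determined by their value at any one time. Since `y' = -1`, the first solution passes through
`(x₀ + X, B1 (x₀ + X), y₀ - X)`, which is exactly where the second one starts; hence the two
agree from `x₀ + X` on, in particular at `x₀ + X + Y`.
-/

open Set

theorem eqOn_Ici_of_hasDerivAt_of_lipschitzWith {E : Type*} [NormedAddCommGroup E]
    [NormedSpace ℝ E] {v : ℝ → E → E} {K : NNReal} (hv : ∀ t, LipschitzWith K (v t))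
    {f g : ℝ → E} {a : ℝ} (hf : ∀ t ∈ Ici a, HasDerivAt f (v t (f t)) t)
    (hg : ∀ t ∈ Ici a, HasDerivAt g (v t (g t)) t) (ha : f a = g a) :
    EqOn f g (Ici a) := fun _ hb =>
  ODE_solution_unique hv
    (HasDerivAt.continuousOn fun t ht => hf t ht.1) (fun t ht => (hf t ht.1).hasDerivWithinAt)
    (HasDerivAt.continuousOn fun t ht => hg t ht.1) (fun t ht => (hg t ht.1).hasDerivWithinAt)
    ha ⟨hb, le_rfl⟩

theorem eq_add_smul_of_hasDerivAt_const {E : Type*} [NormedAddCommGroup E] [NormedSpace ℝ E]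
    {f : ℝ → E} {c : E} {a : ℝ} (hf : ∀ t ∈ Ici a, HasDerivAt f c t) :
    ∀ t ∈ Ici a, f t = f a + (t - a) • c := by
  have hline (t : ℝ) : HasDerivAt (fun s : ℝ => f a + (s - a) • c) c t := by
    simpa using (((hasDerivAt_id t).sub_const a).smul_const c).const_add (f a)
  exact eqOn_Ici_of_hasDerivAt_of_lipschitzWith (v := fun _ _ => c) (K := 0)
    (fun _ => LipschitzWith.const c) hf (fun t _ => hline t) (by simp)

theorem lipschitzWith_pamm_field {ρ : ℝ × ℝ × ℝ → ℝ} {K : NNReal}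
    (hK : ∀ x, LipschitzWith K fun p : ℝ × ℝ => ρ (x, p.1, p.2)) (t : ℝ) :
    LipschitzWith K fun p : ℝ × ℝ => (-ρ (t, p.1, p.2), (-1 : ℝ)) := by
  simpa using (hK t).neg.prodMk (LipschitzWith.const (-1 : ℝ))

theorem pamm_solution_eqOn_Ici {ρ : ℝ × ℝ × ℝ → ℝ} {K : NNReal}
    (hK : ∀ x, LipschitzWith K fun p : ℝ × ℝ => ρ (x, p.1, p.2)) {a : ℝ} {B Y B' Y' : ℝ → ℝ}
    (hB : ∀ t ∈ Ici a, HasDerivAt B (-(ρ (t, B t, Y t))) t)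
    (hY : ∀ t ∈ Ici a, HasDerivAt Y (-1 : ℝ) t)
    (hB' : ∀ t ∈ Ici a, HasDerivAt B' (-(ρ (t, B' t, Y' t))) t)
    (hY' : ∀ t ∈ Ici a, HasDerivAt Y' (-1 : ℝ) t) (hBa : B a = B' a) (hYa : Y a = Y' a) :
    EqOn B B' (Ici a) := fun _ ht =>
  congrArg Prod.fst <| eqOn_Ici_of_hasDerivAt_of_lipschitzWith (lipschitzWith_pamm_field hK)
    (fun s hs => (hB s hs).prodMk (hY s hs)) (fun s hs => (hB' s hs).prodMk (hY' s hs))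
    (Prod.ext hBa hYa) ht

theorem pamm_path_independence_general
    (ρ : ℝ × ℝ × ℝ → ℝ)
    (hρlip : ∃ K : NNReal, ∀ x : ℝ, LipschitzWith K (fun p : ℝ × ℝ => ρ (x, p.1, p.2)))
    (x₀ b₀ y₀ X Y : ℝ) (hX : 0 < X) (hY : 0 < Y)
    (B1 Y1 B2 Y2 : ℝ → ℝ)
    (hY1init : Y1 x₀ = y₀)
    (hB1 : ∀ t ∈ Set.Ici x₀, HasDerivAt B1 (-(ρ (t, B1 t, Y1 t))) t)
    (hY1 : ∀ t ∈ Set.Ici x₀, HasDerivAt Y1 (-1 : ℝ) t)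
    (hB2init : B2 (x₀ + X) = B1 (x₀ + X)) (hY2init : Y2 (x₀ + X) = y₀ - X)
    (hB2 : ∀ t ∈ Set.Ici (x₀ + X), HasDerivAt B2 (-(ρ (t, B2 t, Y2 t))) t)
    (hY2 : ∀ t ∈ Set.Ici (x₀ + X), HasDerivAt Y2 (-1 : ℝ) t) :
    (b₀ - B1 (x₀ + X)) + (B1 (x₀ + X) - B2 ((x₀ + X) + Y)) = b₀ - B1 (x₀ + (X + Y)) ∧
    ((x₀ + X) + Y, B2 ((x₀ + X) + Y), (y₀ - X) - Y)
      = (x₀ + (X + Y), B1 (x₀ + (X + Y)), y₀ - (X + Y)) := by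
  obtain ⟨K, hK⟩ := hρlip
  have hIci : Ici (x₀ + X) ⊆ Ici x₀ := Ici_subset_Ici.mpr (by linarith)
  have hY1X : Y1 (x₀ + X) = y₀ - X := by
    rw [eq_add_smul_of_hasDerivAt_const hY1 _ (hIci self_mem_Ici), hY1init, smul_eq_mul]
    ring
  have hB : B2 (x₀ + X + Y) = B1 (x₀ + (X + Y)) := by
    rw [← add_assoc]
    exact pamm_solution_eqOn_Ici hK hB2 hY2 (fun t ht => hB1 t (hIci ht))
      (fun t ht => hY1 t (hIci ht)) hB2init
      (hY2init.trans hY1X.symm) (le_add_of_nonneg_right hY.le)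
  refine ⟨by rw [hB]; ring, ?_⟩
  rw [hB, add_assoc, sub_sub]

theorem pamm_path_independence
    (ρ : ℝ × ℝ × ℝ → ℝ)
    (hρcont : Continuous ρ)
    (hρlip : ∃ K : NNReal, ∀ x : ℝ, LipschitzWith K (fun p : ℝ × ℝ => ρ (x, p.1, p.2)))
    (x₀ b₀ y₀ X Y : ℝ) (hX : 0 < X) (hY : 0 < Y) (hXY : X + Y ≤ y₀)
    (B1 Y1 B2 Y2 : ℝ → ℝ)
    (hB1init : B1 x₀ = b₀) (hY1init : Y1 x₀ = y₀)
    (hB1 : ∀ t ∈ Set.Ici x₀, HasDerivAt B1 (-(ρ (t, B1 t, Y1 t))) t)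
    (hY1 : ∀ t ∈ Set.Ici x₀, HasDerivAt Y1 (-1 : ℝ) t)
    (hB2init : B2 (x₀ + X) = B1 (x₀ + X)) (hY2init : Y2 (x₀ + X) = y₀ - X)
    (hB2 : ∀ t ∈ Set.Ici (x₀ + X), HasDerivAt B2 (-(ρ (t, B2 t, Y2 t))) t)
    (hY2 : ∀ t ∈ Set.Ici (x₀ + X), HasDerivAt Y2 (-1 : ℝ) t) :
    (b₀ - B1 (x₀ + X)) + (B1 (x₀ + X) - B2 ((x₀ + X) + Y)) = b₀ - B1 (x₀ + (X + Y)) ∧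
    ((x₀ + X) + Y, B2 ((x₀ + X) + Y), (y₀ - X) - Y)
      = (x₀ + (X + Y), B1 (x₀ + (X + Y)), y₀ - (X + Y)) :=
  pamm_path_independence_general ρ hρlip x₀ b₀ y₀ X Y hX hY B1 Y1 B2 Y2 hY1init hB1 hY1 hB2init
    hY2init hB2 hY2
end

section
/- Fix an anchor point (b_a, y_a) with 0 < b_a < y_a, and fixed parameters α > 0 and x_U ∈ [0, y_a); write Δ_a := y_a − b_a and y_U := y_a − x_U. Consider the two-piece price curve p^U(x) := 1 for x ≤ x_U and p^U(x) := 1 − α(x − x_U) for x ≥ x_U, and set b^U(x) := b_a − ∫₀ˣ p^U(t) dt. Then: (a) there exists a point x_L ∈ [0, y_a] satisfying p^U(x_L)·(y_a − x_L) = b^U(x_L) if and only if α ≥ 2(y_a − b_a)/(y_a − x_U)²; and (b) if this inequality holds, such x_L is unique, lies in (x_U, y_a], and is given by x_L = y_a − √((y_a − x_U)² − (2/α)(y_a − b_a)); moreover r_L := 1 − α(x_L − x_U) satisfies b^U(x_L) = r_L·(y_a − x_L), i.e., b_L = (1 − α(x_L − x_U))·(y_a − x_L). -/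
/-!
Below the kink `x_U` the price is `1`, so `b^U(x) = b_a − x` and the cutoff equation would
read `y_a = b_a`, which is false. Above the kink, `p^U(x)(y_a − x) − b^U(x)` equals
`α/2 · ((y_a − x)² − D)` with `D = (y_a − x_U)² − (2/α)(y_a − b_a)`, so the cutoffs are the
points `x ≥ x_U` with `y_a − x = √D`. Such a point exists exactly when `D ≥ 0`, and it then lies
strictly above `x_U` because `D < (y_a − x_U)²`.
-/

open intervalIntegral

noncomputable def twoPiecePrice (α xU t : ℝ) : ℝ := if t ≤ xU then 1 else 1 - α * (t - xU)

noncomputable def reserveValue (ba α xU x : ℝ) : ℝ := ba - ∫ t in (0 : ℝ)..x, twoPiecePrice α xU t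

section TwoPiecePrice

variable {α xU : ℝ}

theorem twoPiecePrice_of_le {t : ℝ} (ht : t ≤ xU) : twoPiecePrice α xU t = 1 := if_pos ht

theorem twoPiecePrice_of_ge {t : ℝ} (ht : xU ≤ t) :
    twoPiecePrice α xU t = 1 - α * (t - xU) := by
  rcases ht.eq_or_lt with rfl | ht
  · simp [twoPiecePrice]
  · exact if_neg ht.not_ge

theorem continuous_twoPiecePrice : Continuous (twoPiecePrice α xU) := by
  have h : twoPiecePrice α xU = fun t => 1 - α * max (t - xU) 0 := by
    funext t
    rcases le_total t xU with ht | ht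
    · simp [twoPiecePrice_of_le ht, ht]
    · simp [twoPiecePrice_of_ge ht, ht]
  rw [h]
  fun_prop

variable {ba x : ℝ}

theorem reserveValue_of_le (hxU : 0 ≤ xU) (hx : x ≤ xU) : reserveValue ba α xU x = ba - x := by
  have h : Set.EqOn (twoPiecePrice α xU) 1 (Set.uIcc 0 x) := fun t ht =>
    twoPiecePrice_of_le ((Set.mem_uIcc.mp ht).elim (·.2.trans hx) (·.2.trans hxU))
  simp [reserveValue, integral_congr h]

theorem reserveValue_of_ge (hxU : 0 ≤ xU) (hx : xU ≤ x) :
    reserveValue ba α xU x = ba - x + α * (x - xU) ^ 2 / 2 := by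
  have hlinear : Set.EqOn (twoPiecePrice α xU) (fun t => 1 - α * (t - xU)) (Set.uIcc xU x) :=
    fun t ht => twoPiecePrice_of_ge (Set.uIcc_of_le hx ▸ ht).1
  have hupper : ∫ t in xU..x, twoPiecePrice α xU t = (x - xU) - α * (x - xU) ^ 2 / 2 := by
    rw [integral_congr hlinear, integral_comp_sub_right (fun t => 1 - α * t),
      integral_sub intervalIntegrable_const ((continuous_const_mul α).intervalIntegrable _ _),
      integral_const_mul]
    simp
    ring
  have hint : ∀ a b : ℝ, IntervalIntegrable (twoPiecePrice α xU) MeasureTheory.volume a b :=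
    fun a b => continuous_twoPiecePrice.intervalIntegrable a b
  have hlower := reserveValue_of_le (ba := ba) (α := α) hxU le_rfl
  rw [reserveValue, ← integral_add_adjacent_intervals (hint 0 xU) (hint xU x), hupper]
  rw [reserveValue] at hlower
  linarith

end TwoPiecePrice

section Cutoff

variable {ba ya α xU : ℝ}

theorem cutoff_equation_iff (hα : 0 < α) (hxU : 0 ≤ xU) (hbya : ba < ya) (z : ℝ) :
    twoPiecePrice α xU z * (ya - z) = reserveValue ba α xU z ↔
      xU ≤ z ∧ (ya - z) ^ 2 = (ya - xU) ^ 2 - 2 / α * (ya - ba) := by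
  rcases lt_or_ge z xU with hz | hz
  · rw [twoPiecePrice_of_le hz.le, reserveValue_of_le hxU hz.le]
    constructor
    · intro h; linarith
    · intro h; linarith [h.1]
  · rw [twoPiecePrice_of_ge hz, reserveValue_of_ge hxU hz]
    have key : (1 - α * (z - xU)) * (ya - z) - (ba - z + α * (z - xU) ^ 2 / 2)
        = α / 2 * ((ya - z) ^ 2 - ((ya - xU) ^ 2 - 2 / α * (ya - ba))) := by
      field_simp
      ring
    rw [← sub_eq_zero, key, mul_eq_zero, sub_eq_zero]
    simp [hα.ne', hz]

theorem cutoff_discriminant_lt (hα : 0 < α) (hbya : ba < ya) :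
    (ya - xU) ^ 2 - 2 / α * (ya - ba) < (ya - xU) ^ 2 := by
  have : 0 < 2 / α * (ya - ba) := mul_pos (by positivity) (by linarith)
  linarith

theorem cutoff_discriminant_nonneg_iff (hα : 0 < α) (hxUya : xU < ya) :
    0 ≤ (ya - xU) ^ 2 - 2 / α * (ya - ba) ↔ 2 * (ya - ba) / (ya - xU) ^ 2 ≤ α := by
  have hsq : 0 < (ya - xU) ^ 2 := by nlinarith
  rw [sub_nonneg, div_le_iff₀ hsq, div_mul_eq_mul_div, div_le_iff₀ hα, mul_comm α]

theorem lt_sub_sqrt_cutoff_discriminant (hα : 0 < α) (hbya : ba < ya) (hxUya : xU < ya) :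
    xU < ya - √((ya - xU) ^ 2 - 2 / α * (ya - ba)) := by
  have := (Real.sqrt_lt' (sub_pos.mpr hxUya)).mpr (cutoff_discriminant_lt (xU := xU) hα hbya)
  linarith

theorem cutoff_equation_iff_eq_sub_sqrt (hα : 0 < α) (hxU : 0 ≤ xU) (hbya : ba < ya)
    (hxUya : xU < ya) {z : ℝ} (hz : z ≤ ya) :
    twoPiecePrice α xU z * (ya - z) = reserveValue ba α xU z ↔
      0 ≤ (ya - xU) ^ 2 - 2 / α * (ya - ba) ∧
        z = ya - √((ya - xU) ^ 2 - 2 / α * (ya - ba)) := by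
  rw [cutoff_equation_iff hα hxU hbya]
  constructor
  · rintro ⟨-, hsq⟩
    rw [← hsq, Real.sqrt_sq (sub_nonneg.mpr hz)]
    exact ⟨sq_nonneg _, by ring⟩
  · rintro ⟨hD, rfl⟩
    refine ⟨(lt_sub_sqrt_cutoff_discriminant hα hbya hxUya).le, ?_⟩
    rw [sub_sub_cancel, Real.sq_sqrt hD]

end Cutoff

theorem lower_cutoff_exists_iff_general
    (ba ya α xU : ℝ)
    (hbya : ba < ya) (hα : 0 < α)
    (hxU0 : 0 ≤ xU) (hxUya : xU < ya) :
    let pU : ℝ → ℝ := fun t => if t ≤ xU then 1 else 1 - α * (t - xU)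
    let bU : ℝ → ℝ := fun x => ba - ∫ t in (0:ℝ)..x, pU t
    ((∃ z ∈ Set.Icc (0:ℝ) ya, pU z * (ya - z) = bU z) ↔
        2 * (ya - ba) / (ya - xU) ^ 2 ≤ α) ∧
    (2 * (ya - ba) / (ya - xU) ^ 2 ≤ α →
      let xL : ℝ := ya - Real.sqrt ((ya - xU) ^ 2 - 2 / α * (ya - ba))
      xL ∈ Set.Ioc xU ya ∧
      pU xL * (ya - xL) = bU xL ∧
      (∀ z ∈ Set.Icc (0:ℝ) ya, pU z * (ya - z) = bU z → z = xL) ∧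
      bU xL = (1 - α * (xL - xU)) * (ya - xL)) := by
  intro pU bU
  set D := (ya - xU) ^ 2 - 2 / α * (ya - ba)
  have hsol : ∀ z ≤ ya, pU z * (ya - z) = bU z ↔ 0 ≤ D ∧ z = ya - √D :=
    fun z hz => cutoff_equation_iff_eq_sub_sqrt hα hxU0 hbya hxUya hz
  have hxU_lt : xU < ya - √D := lt_sub_sqrt_cutoff_discriminant hα hbya hxUya
  have hle_ya : ya - √D ≤ ya := sub_le_self _ (Real.sqrt_nonneg _)
  rw [← cutoff_discriminant_nonneg_iff hα hxUya]
  refine ⟨⟨fun ⟨z, hz, h⟩ => ((hsol z hz.2).mp h).1, fun hD => ?_⟩, fun hD => ?_⟩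
  · exact ⟨ya - √D, ⟨hxU0.trans hxU_lt.le, hle_ya⟩, (hsol _ hle_ya).mpr ⟨hD, rfl⟩⟩
  have heq : pU (ya - √D) * (ya - (ya - √D)) = bU (ya - √D) := (hsol _ hle_ya).mpr ⟨hD, rfl⟩
  have hprice : pU (ya - √D) = 1 - α * (ya - √D - xU) := twoPiecePrice_of_ge hxU_lt.le
  exact ⟨⟨hxU_lt, hle_ya⟩, heq, fun z hz h => ((hsol z hz.2).mp h).2, by rw [← heq, hprice]⟩

/-- Proposition `prop:xm`, parts 1 and 3: existence, uniqueness and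
    explicit formula for the lower cutoff `x_L` where the two-piece marginal price
    equals the reserve ratio, i.e. `p^U(x_L)·(y_a − x_L) = b^U(x_L)`. -/
theorem lower_cutoff_exists_iff
    (ba ya α xU : ℝ)
    (hba : 0 < ba) (hbya : ba < ya) (hα : 0 < α)
    (hxU0 : 0 ≤ xU) (hxUya : xU < ya) :
    let pU : ℝ → ℝ := fun t => if t ≤ xU then 1 else 1 - α * (t - xU)
    let bU : ℝ → ℝ := fun x => ba - ∫ t in (0:ℝ)..x, pU t
    ((∃ z ∈ Set.Icc (0:ℝ) ya, pU z * (ya - z) = bU z) ↔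
        2 * (ya - ba) / (ya - xU) ^ 2 ≤ α) ∧
    (2 * (ya - ba) / (ya - xU) ^ 2 ≤ α →
      let xL : ℝ := ya - Real.sqrt ((ya - xU) ^ 2 - 2 / α * (ya - ba))
      xL ∈ Set.Ioc xU ya ∧
      pU xL * (ya - xL) = bU xL ∧
      (∀ z ∈ Set.Icc (0:ℝ) ya, pU z * (ya - z) = bU z → z = xL) ∧
      bU xL = (1 - α * (xL - xU)) * (ya - xL)) :=
  lower_cutoff_exists_iff_general ba ya α xU hbya hα hxU0 hxUya
end

section
/- Fix an anchor point (b_a, y_a) with 0 < b_a < y_a, and fixed parameters α > 0 and x_U ∈ [0, y_a). If α < 2(y_a − b_a)/(y_a − x_U)², then the reserve is exhausted before all tokens are redeemed under the two-piece price curve: there exists x ∈ [0, y_a) such that b^U(x) = 0, where b^U(x) := b_a − ∫₀ˣ p^U(t) dt. -/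
/-- Proposition `prop:xm`, part 2: if `α < 2(y_a − b_a)/(y_a − x_U)²`,
    the reserve is exhausted before all tokens are redeemed under the two-piece price
    curve (`x_L = ∞`): there is `x ∈ [0, y_a)` with `b^U(x) = 0`. -/
theorem reserve_exhausted_of_small_alpha
    (ba ya α xU : ℝ)
    (hba : 0 < ba) (hbya : ba < ya) (hα : 0 < α)
    (hxU0 : 0 ≤ xU) (hxUya : xU < ya)
    (h : α < 2 * (ya - ba) / (ya - xU) ^ 2) :
    ∃ x ∈ Set.Ico (0:ℝ) ya,
      ba - (∫ t in (0:ℝ)..x, if t ≤ xU then (1:ℝ) else 1 - α * (t - xU)) = 0 := by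
  -- the integrand equals a continuous function
  have hmin : ∀ t : ℝ, (if t ≤ xU then (1:ℝ) else 1 - α * (t - xU))
      = min 1 (1 - α * (t - xU)) := by
    intro t
    by_cases ht : t ≤ xU
    · simp only [ht, if_true]
      have : α * (t - xU) ≤ 0 := mul_nonpos_of_nonneg_of_nonpos hα.le (by linarith)
      rw [min_eq_left]; linarith
    · simp only [ht, if_false]
      push_neg at ht
      have : 0 ≤ α * (t - xU) := mul_nonneg hα.le (by linarith)
      rw [min_eq_right]; linarith
  have hc : Continuous fun t : ℝ => min 1 (1 - α * (t - xU)) := continuous_const.min (continuous_const.sub (continuous_const.mul (continuous_id.sub continuous_const)))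
  set g : ℝ → ℝ := fun x => ba - ∫ t in (0:ℝ)..x, min 1 (1 - α * (t - xU)) with hg
  have hgc : Continuous g := by
    apply continuous_const.sub
    exact intervalIntegral.continuous_primitive
      (fun a b => (hc.intervalIntegrable a b)) 0
  -- compute g ya
  have hlin : ∀ c : ℝ, (∫ u in (0:ℝ)..c, (1 - α * u)) = c - α * c ^ 2 / 2 := by
    intro c
    have h1 : (∫ u in (0:ℝ)..c, (1 - α * u))
        = (∫ u in (0:ℝ)..c, (1:ℝ)) - α * ∫ u in (0:ℝ)..c, u := by
      rw [intervalIntegral.integral_sub intervalIntegrable_const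
        (by exact (continuous_const.mul continuous_id).intervalIntegrable 0 c),
        intervalIntegral.integral_const_mul]
    rw [h1, intervalIntegral.integral_const, integral_id]
    simp only [smul_eq_mul]
    ring
  have hgya : g ya = ba - ya + α * (ya - xU) ^ 2 / 2 := by
    have hsplit : (∫ t in (0:ℝ)..ya, min 1 (1 - α * (t - xU)))
        = (∫ t in (0:ℝ)..xU, min 1 (1 - α * (t - xU)))
          + ∫ t in xU..ya, min 1 (1 - α * (t - xU)) :=
      (intervalIntegral.integral_add_adjacent_intervals
        (hc.intervalIntegrable 0 xU) (hc.intervalIntegrable xU ya)).symm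
    have h1 : (∫ t in (0:ℝ)..xU, min 1 (1 - α * (t - xU))) = xU := by
      rw [intervalIntegral.integral_congr (g := fun _ => (1:ℝ))
        (fun t ht => by
          rw [Set.uIcc_of_le hxU0] at ht
          have : α * (t - xU) ≤ 0 :=
            mul_nonpos_of_nonneg_of_nonpos hα.le (by linarith [ht.2])
          rw [min_eq_left]; linarith)]
      simp
    have h2 : (∫ t in xU..ya, min 1 (1 - α * (t - xU)))
        = (ya - xU) - α * (ya - xU) ^ 2 / 2 := by
      rw [intervalIntegral.integral_congr (g := fun t => 1 - α * (t - xU))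
        (fun t ht => by
          rw [Set.uIcc_of_le hxUya.le] at ht
          have : 0 ≤ α * (t - xU) := mul_nonneg hα.le (by linarith [ht.1])
          rw [min_eq_right]; linarith)]
      have := intervalIntegral.integral_comp_sub_right (a := xU) (b := ya)
        (fun u => 1 - α * u) xU
      simp only [sub_self] at this
      rw [this, hlin]
    rw [hg]; simp only; rw [hsplit, h1, h2]; ring
  have hne : (ya - xU) ^ 2 > 0 := pow_pos (by linarith) 2
  have hgya_neg : g ya < 0 := by
    rw [hgya]
    have := (lt_div_iff₀ hne).mp h
    nlinarith
  have hg0 : g 0 = ba := by simp [hg]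
  -- intermediate value theorem
  have hsub := intermediate_value_Icc' (le_of_lt (lt_of_le_of_lt hxU0 hxUya))
    hgc.continuousOn (a := (0:ℝ)) (b := ya)
  have h0mem : (0:ℝ) ∈ Set.Icc (g ya) (g 0) := ⟨hgya_neg.le, by rw [hg0]; exact hba.le⟩
  obtain ⟨x, hx, hgx⟩ := hsub h0mem
  refine ⟨x, ⟨hx.1, lt_of_le_of_ne hx.2 ?_⟩, ?_⟩
  · rintro rfl; rw [hgx] at hgya_neg; exact lt_irrefl _ hgya_neg
  · rw [show (∫ t in (0:ℝ)..x, if t ≤ xU then (1:ℝ) else 1 - α * (t - xU))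
      = ∫ t in (0:ℝ)..x, min 1 (1 - α * (t - xU)) from
      intervalIntegral.integral_congr (fun t _ => hmin t)]
    exact hgx
end

section
/- Fix an anchor point (b_a, y_a) with 0 < b_a < y_a, a floor θ̄ ∈ [0,1] with θ := 1 − θ̄, and parameters α > 0 and x_U ∈ [0, y_a) such that α ≥ 2(y_a − b_a)/(y_a − x_U)². Let x_L := y_a − √((y_a − x_U)² − (2/α)(y_a − b_a)) and r_L := 1 − α(x_L − x_U). Then r_L ≥ θ̄ if and only if α(y_a − x_U) ≤ θ (condition TH) or α(b_a − θ̄·y_a) − α·θ·x_U − θ²/2 ≥ 0 (condition TL). -/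
/-- Lemma `lem:thetafloor-prep`: assuming the lower cutoff exists
    (`α(y_a − x_U)² ≥ 2(y_a − b_a)`), the terminal redemption rate
    `r_L := 1 − α(x_L − x_U)` satisfies `r_L ≥ θ̄` iff condition (TH)
    `α(y_a − x_U) ≤ θ` or condition (TL)
    `α(b_a − θ̄·y_a) − α·θ·x_U − θ²/2 ≥ 0` holds, where `θ := 1 − θ̄`. -/
theorem theta_floor_criterion
    (ba ya θbar α xU : ℝ)
    (hba : 0 < ba) (hbya : ba < ya)
    (hθ0 : 0 ≤ θbar) (hθ1 : θbar ≤ 1)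
    (hα : 0 < α) (hxU0 : 0 ≤ xU) (hxUya : xU < ya)
    (hex : 2 * (ya - ba) / (ya - xU) ^ 2 ≤ α) :
    let θ : ℝ := 1 - θbar
    let xL : ℝ := ya - Real.sqrt ((ya - xU) ^ 2 - 2 / α * (ya - ba))
    let rL : ℝ := 1 - α * (xL - xU)
    (θbar ≤ rL ↔
      α * (ya - xU) ≤ θ ∨ 0 ≤ α * (ba - θbar * ya) - α * θ * xU - θ ^ 2 / 2) := by
  intro θ xL rL
  have hyx : 0 < ya - xU := by linarith
  have hD : 0 ≤ (ya - xU) ^ 2 - 2 / α * (ya - ba) := by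
    have h := (div_le_iff₀ (by positivity : (0:ℝ) < (ya - xU) ^ 2)).mp hex
    rw [sub_nonneg, div_mul_eq_mul_div, div_le_iff₀ hα]
    nlinarith
  set s := Real.sqrt ((ya - xU) ^ 2 - 2 / α * (ya - ba)) with hs
  have hs0 : 0 ≤ s := Real.sqrt_nonneg _
  have hs2 : s ^ 2 = (ya - xU) ^ 2 - 2 / α * (ya - ba) := Real.sq_sqrt hD
  have hs2' : α * s ^ 2 = α * (ya - xU) ^ 2 - 2 * (ya - ba) := by
    rw [hs2]; field_simp
  show θbar ≤ 1 - α * (ya - s - xU) ↔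
      α * (ya - xU) ≤ 1 - θbar ∨
      0 ≤ α * (ba - θbar * ya) - α * (1 - θbar) * xU - (1 - θbar) ^ 2 / 2
  constructor
  · intro h
    by_cases hth : α * (ya - xU) ≤ 1 - θbar
    · exact Or.inl hth
    · right
      push_neg at hth
      have h1 : 0 ≤ α * (ya - xU) - (1 - θbar) := by linarith
      have h2 : α * (ya - xU) - (1 - θbar) ≤ α * s := by nlinarith
      have hsq : (α * (ya - xU) - (1 - θbar)) ^ 2 ≤ (α * s) ^ 2 := by nlinarith
      nlinarith [hsq, hs2', sq_nonneg s]
  · rintro (h | h)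
    · nlinarith
    · have hsq : (α * (ya - xU) - (1 - θbar)) ^ 2 ≤ (α * s) ^ 2 := by
        nlinarith [hs2']
      nlinarith [mul_nonneg hα.le hs0]
end

section
/- Fix an anchor point (b_a, y_a) with 0 < b_a < y_a, write r_a := b_a/y_a and Δ_a := y_a − b_a, and fix θ̄ ∈ [0,1) with θ := 1 − θ̄ such that θ̄ < r_a < 1. Let A := { α > 0 : α·y_a² ≥ 2Δ_a and ( α·y_a ≤ θ or α(b_a − θ̄·y_a) ≥ θ²/2 ) } be the set of decay slopes α that admit x_U = 0. Then A has a minimum α̂, and α̂ = 2(1 − r_a)/y_a if r_a ≥ (1 + θ̄)/2, while α̂ = θ²/(2(b_a − θ̄·y_a)) if r_a ≤ (1 + θ̄)/2; in the boundary case r_a = (1 + θ̄)/2 both formulas give the common value θ/y_a. -/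
/-!
Write `Δ := ya - ba` and `c := ba - θbar * ya`, so that `θ * ya = Δ + c` and the condition
`r_a ≥ (1 + θbar) / 2` reads `2Δ ≤ θ * ya`, i.e. `c ≥ Δ`. The set `A` is the half-line
`α ≥ 2Δ / ya²` cut by the union of `α ≤ θ / ya` and `α ≥ θ² / (2c)`. If `2Δ ≤ θ * ya`, the
endpoint `2Δ / ya²` already satisfies `α ≤ θ / ya` and is the minimum. Otherwise the branch
`α ≤ θ / ya` meets the half-line at most when `Δ = c`, and the minimum is `θ² / (2c)`, which lies
on the half-line by AM-GM: `(Δ + c)² ≥ 4Δc`. In the boundary case both minima of the same set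
coincide.
-/

def slopeSet (ba ya θbar : ℝ) : Set ℝ :=
  {α : ℝ | 0 < α ∧ 2 * (ya - ba) ≤ α * ya ^ 2 ∧
    (α * ya ≤ 1 - θbar ∨ (1 - θbar) ^ 2 / 2 ≤ α * (ba - θbar * ya))}

section
variable {ba ya θbar : ℝ}

lemma isLeast_slopeSet_of_two_mul_le (hya : 0 < ya) (hbya : ba < ya)
    (h : 2 * (ya - ba) ≤ (1 - θbar) * ya) :
    IsLeast (slopeSet ba ya θbar) (2 * (ya - ba) / ya ^ 2) := by
  have hya2 : 0 < ya ^ 2 := by positivity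
  refine ⟨⟨div_pos (by linarith) hya2, (div_mul_cancel₀ _ hya2.ne').ge, Or.inl ?_⟩, ?_⟩
  · rw [div_mul_eq_mul_div, div_le_iff₀ hya2]
    linarith [mul_le_mul_of_nonneg_right h hya.le]
  · rintro α ⟨-, hα, -⟩
    exact (div_le_iff₀ hya2).2 hα

lemma isLeast_slopeSet_of_le_two_mul (hya : 0 < ya) (hc : θbar * ya < ba)
    (h : (1 - θbar) * ya ≤ 2 * (ya - ba)) :
    IsLeast (slopeSet ba ya θbar) ((1 - θbar) ^ 2 / (2 * (ba - θbar * ya))) := by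
  set Δ := ya - ba
  set c := ba - θbar * ya
  have hθya : (1 - θbar) * ya = Δ + c := by ring
  have hc0 : 0 < 2 * c := by linarith
  have hθ : 0 < 1 - θbar := pos_of_mul_pos_left (by linarith) hya.le
  refine ⟨⟨by positivity, ?_, Or.inr ?_⟩, ?_⟩
  · have amgm : 2 * Δ * (2 * c) ≤ ((1 - θbar) * ya) ^ 2 := by
      rw [hθya]; linarith [four_mul_le_sq_add Δ c]
    rw [div_mul_eq_mul_div, le_div_iff₀ hc0]
    linarith
  · show _ ≤ _ / (2 * c) * c
    rw [div_mul_eq_mul_div, le_div_iff₀ hc0]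
    exact le_of_eq (by ring)
  · rintro α ⟨-, hα, hα' | hα'⟩
    · have hαya : α * ya ^ 2 ≤ (1 - θbar) * ya := by
        rw [sq, ← mul_assoc]
        exact mul_le_mul_of_nonneg_right hα' hya.le
      have hΔc : Δ = c := by linarith
      rw [div_le_iff₀ hc0]
      nlinarith
    · rw [div_le_iff₀ hc0]
      linarith

end

theorem alphaHat_isLeast_general
    (ba ya θbar : ℝ)
    (hba : 0 < ba) (hbya : ba < ya)
    (hra : θbar < ba / ya) :
    let θ : ℝ := 1 - θbar
    let A : Set ℝ := {α : ℝ | 0 < α ∧ 2 * (ya - ba) ≤ α * ya ^ 2 ∧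
      (α * ya ≤ θ ∨ θ ^ 2 / 2 ≤ α * (ba - θbar * ya))}
    IsLeast A (if (1 + θbar) / 2 ≤ ba / ya then 2 * (1 - ba / ya) / ya
      else θ ^ 2 / (2 * (ba - θbar * ya))) ∧
    ((1 + θbar) / 2 ≤ ba / ya → IsLeast A (2 * (1 - ba / ya) / ya)) ∧
    (ba / ya ≤ (1 + θbar) / 2 → IsLeast A (θ ^ 2 / (2 * (ba - θbar * ya)))) ∧
    (ba / ya = (1 + θbar) / 2 →
      2 * (1 - ba / ya) / ya = θ / ya ∧ θ ^ 2 / (2 * (ba - θbar * ya)) = θ / ya) := by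
  intro θ A
  have hya : 0 < ya := hba.trans hbya
  have case₁ (h : (1 + θbar) / 2 ≤ ba / ya) : IsLeast A (2 * (1 - ba / ya) / ya) := by
    rw [le_div_iff₀ hya] at h
    rw [show 2 * (1 - ba / ya) / ya = 2 * (ya - ba) / ya ^ 2 by field_simp]
    exact isLeast_slopeSet_of_two_mul_le hya hbya (by linarith)
  have case₂ (h : ba / ya ≤ (1 + θbar) / 2) : IsLeast A (θ ^ 2 / (2 * (ba - θbar * ya))) := by
    rw [div_le_iff₀ hya] at h
    exact isLeast_slopeSet_of_le_two_mul hya ((lt_div_iff₀ hya).1 hra) (by linarith)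
  refine ⟨?_, case₁, case₂, fun heq => ⟨?_, ?_⟩⟩
  · split_ifs with h
    exacts [case₁ h, case₂ (le_of_not_ge h)]
  · rw [heq]; ring
  · rw [(case₂ heq.le).unique (case₁ heq.ge), heq]; ring

/-- Proposition `prop:alpha`: the set `A` of decay slopes `α` that
    admit `x_U = 0` has a minimum `α̂`, equal to `2(1 − r_a)/y_a` when
    `r_a ≥ (1 + θ̄)/2` and `θ²/(2(b_a − θ̄·y_a))` when `r_a ≤ (1 + θ̄)/2`; in the
    boundary case both formulas give `θ/y_a`. -/
theorem alphaHat_isLeast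
    (ba ya θbar : ℝ)
    (hba : 0 < ba) (hbya : ba < ya)
    (hθ0 : 0 ≤ θbar) (hθ1 : θbar < 1)
    (hra : θbar < ba / ya) (hra1 : ba / ya < 1) :
    let θ : ℝ := 1 - θbar
    let A : Set ℝ := {α : ℝ | 0 < α ∧ 2 * (ya - ba) ≤ α * ya ^ 2 ∧
      (α * ya ≤ θ ∨ θ ^ 2 / 2 ≤ α * (ba - θbar * ya))}
    IsLeast A (if (1 + θbar) / 2 ≤ ba / ya then 2 * (1 - ba / ya) / ya
      else θ ^ 2 / (2 * (ba - θbar * ya))) ∧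
    ((1 + θbar) / 2 ≤ ba / ya → IsLeast A (2 * (1 - ba / ya) / ya)) ∧
    (ba / ya ≤ (1 + θbar) / 2 → IsLeast A (θ ^ 2 / (2 * (ba - θbar * ya)))) ∧
    (ba / ya = (1 + θbar) / 2 →
      2 * (1 - ba / ya) / ya = θ / ya ∧ θ ^ 2 / (2 * (ba - θbar * ya)) = θ / ya) :=
  alphaHat_isLeast_general ba ya θbar hba hbya hra
end

section
/- Fix an anchor point (b_a, y_a) with 0 < b_a < y_a, write r_a := b_a/y_a and Δ_a := y_a − b_a, and fix θ̄ ∈ [0,1) with θ := 1 − θ̄ such that θ̄ < r_a < 1. Let α ≥ α̂, where α̂ is the minimal admissible decay slope. Then the set { x_U ∈ [0, y_a) : α(y_a − x_U)² ≥ 2Δ_a and ( α(y_a − x_U) ≤ θ or α(b_a − θ̄·y_a) − α·θ·x_U − θ²/2 ≥ 0 ) } has a maximum x̂_U(α), and x̂_U(α) = y_a − √(2Δ_a/α) if α·Δ_a ≤ θ²/2, while x̂_U(α) = y_a − Δ_a/θ − θ/(2α) if α·Δ_a ≥ θ²/2; in the boundary case α·Δ_a = θ²/2 both formulas give the common value y_a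 − θ/α. -/
/-!
Put `θ = 1 - θ̄`, `Δ = y_a - b_a` and `u = y_a - x_U`. An admissible cutoff has `u ≥ √(2Δ/α)` and
either `αu ≤ θ` or `u ≥ Δ/θ + θ/(2α)`, and the smallest such `u` gives `x̂_U`. When `2αΔ ≤ θ²` the
first alternative is compatible with `u = √(2Δ/α)`; otherwise it forces `u ≥ Δ/θ + θ/(2α)` too, and
this bound is attained, since by AM-GM it is at least `√(2Δ/α)`. That `x̂_U ≥ 0` comes from
`α ≥ α̂`, which says exactly that `x_U = 0` is admissible.
-/

noncomputable def minimalSlope (b y θbar : ℝ) : ℝ :=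
  if (1 + θbar) / 2 ≤ b / y then 2 * (1 - b / y) / y
  else (1 - θbar) ^ 2 / (2 * (b - θbar * y))

def admissibleCutoffs (b y θbar α : ℝ) : Set ℝ :=
  {xU | xU ∈ Set.Ico 0 y ∧ 2 * (y - b) ≤ α * (y - xU) ^ 2 ∧
    (α * (y - xU) ≤ 1 - θbar ∨
      0 ≤ α * (b - θbar * y) - α * (1 - θbar) * xU - (1 - θbar) ^ 2 / 2)}

section
variable {b y θbar α x : ℝ}

theorem zero_mem_admissibleCutoffs (hb : 0 < b) (hby : b < y) (hθ : θbar < b / y)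
    (hα : minimalSlope b y θbar ≤ α) : 0 ∈ admissibleCutoffs b y θbar α := by
  have hy : 0 < y := hb.trans hby
  have hc : θbar * y < b := (lt_div_iff₀ hy).mp hθ
  have hθ1 : 0 < 1 - θbar := by nlinarith
  refine ⟨⟨le_rfl, hy⟩, ?_⟩
  simp only [sub_zero, mul_zero]
  unfold minimalSlope at hα
  split_ifs at hα with hr
  · have hr' : (1 + θbar) * y ≤ 2 * b := by
      rw [div_le_div_iff₀ two_pos hy] at hr; linarith
    have hslope : 2 * (1 - b / y) / y * y ^ 2 = 2 * (y - b) := by field_simp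
    refine ⟨hslope ▸ mul_le_mul_of_nonneg_right hα (sq_nonneg y), ?_⟩
    by_cases hαy : α * y ≤ 1 - θbar
    · exact Or.inl hαy
    · have hα0 : 0 ≤ α := by nlinarith
      right; nlinarith
  · have hθc : (1 - θbar) ^ 2 ≤ 2 * α * (b - θbar * y) := by
      rw [div_le_iff₀ (by linarith)] at hα; linarith
    -- `(θ y)² = (Δ + c)² ≥ 4Δc` with `c = b - θ̄ y`
    refine ⟨?_, Or.inr (by linarith)⟩
    nlinarith [sq_nonneg (y - b - (b - θbar * y)), mul_le_mul_of_nonneg_right hθc (sq_nonneg y)]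

theorem pos_of_mem_admissibleCutoffs (hby : b < y) (hx : x ∈ admissibleCutoffs b y θbar α) :
    0 < α := by
  obtain ⟨-, hΔ, -⟩ := hx
  by_contra! hα
  nlinarith [mul_nonpos_of_nonpos_of_nonneg hα (sq_nonneg (y - x))]

theorem sqrt_le_sub_of_mem_admissibleCutoffs (hα : 0 < α)
    (hx : x ∈ admissibleCutoffs b y θbar α) : √(2 * (y - b) / α) ≤ y - x := by
  obtain ⟨⟨-, hxy⟩, hΔ, -⟩ := hx
  rw [Real.sqrt_le_left, div_le_iff₀ hα]
  · linarith
  · linarith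

theorem add_le_sub_of_mem_admissibleCutoffs (hθ : θbar < 1) (hα : 0 < α)
    (h : (1 - θbar) ^ 2 / 2 ≤ α * (y - b)) (hx : x ∈ admissibleCutoffs b y θbar α) :
    (y - b) / (1 - θbar) + (1 - θbar) / (2 * α) ≤ y - x := by
  obtain ⟨⟨-, hxy⟩, hΔ, hαu | hrate⟩ := hx
  all_goals
    rw [div_add_div _ _ (by linarith) (by positivity), div_le_iff₀ (by nlinarith)]
  · have hΔu : 2 * (y - b) ≤ (1 - θbar) * (y - x) := by
      nlinarith [mul_le_mul_of_nonneg_right hαu (sub_nonneg.2 hxy.le)]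
    nlinarith [mul_le_mul_of_nonneg_left hΔu hα.le]
  · nlinarith

theorem isGreatest_admissibleCutoffs_of_le (hby : b < y) (hθ : θbar < 1)
    (h0 : 0 ∈ admissibleCutoffs b y θbar α) (h : α * (y - b) ≤ (1 - θbar) ^ 2 / 2) :
    IsGreatest (admissibleCutoffs b y θbar α) (y - √(2 * (y - b) / α)) := by
  have hα := pos_of_mem_admissibleCutoffs hby h0
  have hs : α * √(2 * (y - b) / α) ^ 2 = 2 * (y - b) := by
    rw [Real.sq_sqrt (by have := sub_pos.2 hby; positivity)]; field_simp
  refine ⟨⟨⟨?_, ?_⟩, ?_, Or.inl ?_⟩, fun x hx ↦ ?_⟩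
  · simpa using sqrt_le_sub_of_mem_admissibleCutoffs hα h0
  · exact sub_lt_self _ (Real.sqrt_pos.2 (div_pos (by linarith) hα))
  · rw [sub_sub_cancel, hs]
  · rw [sub_sub_cancel]
    nlinarith [Real.sqrt_nonneg (2 * (y - b) / α)]
  · exact le_sub_comm.mpr (sqrt_le_sub_of_mem_admissibleCutoffs hα hx)

theorem isGreatest_admissibleCutoffs_of_ge (hby : b < y) (hθ : θbar < 1)
    (h0 : 0 ∈ admissibleCutoffs b y θbar α) (h : (1 - θbar) ^ 2 / 2 ≤ α * (y - b)) :
    IsGreatest (admissibleCutoffs b y θbar α)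
      (y - (y - b) / (1 - θbar) - (1 - θbar) / (2 * α)) := by
  have hα := pos_of_mem_admissibleCutoffs hby h0
  have hθ' : 0 < 1 - θbar := by linarith
  have hΔ : 0 < y - b := by linarith
  rw [sub_sub]
  set ℓ := (y - b) / (1 - θbar) + (1 - θbar) / (2 * α) with hℓ
  have hamgm : α * ℓ ^ 2 = α * ((y - b) / (1 - θbar) - (1 - θbar) / (2 * α)) ^ 2 + 2 * (y - b) := by
    rw [hℓ]; field_simp; ring
  refine ⟨⟨⟨?_, ?_⟩, ?_, Or.inr ?_⟩, fun x hx ↦ ?_⟩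
  · simpa using add_le_sub_of_mem_admissibleCutoffs hθ hα h h0
  · exact sub_lt_self _ (by positivity)
  · rw [sub_sub_cancel, hamgm]
    exact le_add_of_nonneg_left (by positivity)
  · apply le_of_eq
    rw [hℓ]; field_simp; ring
  · exact le_sub_comm.mpr (add_le_sub_of_mem_admissibleCutoffs hθ hα h hx)

theorem sqrt_eq_div_of_mul_eq (hθ : θbar < 1) (hα : 0 < α)
    (h : α * (y - b) = (1 - θbar) ^ 2 / 2) : √(2 * (y - b) / α) = (1 - θbar) / α := by
  have hsq : 2 * (y - b) / α = ((1 - θbar) / α) ^ 2 := by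
    field_simp
    linear_combination 2 * h
  rw [hsq, Real.sqrt_sq (div_nonneg (by linarith) hα.le)]

theorem add_eq_div_of_mul_eq (hθ : θbar < 1) (hα : 0 < α)
    (h : α * (y - b) = (1 - θbar) ^ 2 / 2) :
    (y - b) / (1 - θbar) + (1 - θbar) / (2 * α) = (1 - θbar) / α := by
  have : 1 - θbar ≠ 0 := by linarith
  field_simp
  linear_combination 2 * h

end

theorem xUHat_isGreatest_general
    (ba ya θbar α : ℝ)
    (hba : 0 < ba) (hbya : ba < ya)
    (hθ1 : θbar < 1)
    (hra : θbar < ba / ya)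
    (hα : (if (1 + θbar) / 2 ≤ ba / ya then 2 * (1 - ba / ya) / ya
      else (1 - θbar) ^ 2 / (2 * (ba - θbar * ya))) ≤ α) :
    let θ : ℝ := 1 - θbar
    let Δa : ℝ := ya - ba
    let S : Set ℝ := {xU : ℝ | xU ∈ Set.Ico (0:ℝ) ya ∧ 2 * Δa ≤ α * (ya - xU) ^ 2 ∧
      (α * (ya - xU) ≤ θ ∨ 0 ≤ α * (ba - θbar * ya) - α * θ * xU - θ ^ 2 / 2)}
    IsGreatest S (if α * Δa ≤ θ ^ 2 / 2 then ya - Real.sqrt (2 * Δa / α)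
      else ya - Δa / θ - θ / (2 * α)) ∧
    (α * Δa ≤ θ ^ 2 / 2 → IsGreatest S (ya - Real.sqrt (2 * Δa / α))) ∧
    (θ ^ 2 / 2 ≤ α * Δa → IsGreatest S (ya - Δa / θ - θ / (2 * α))) ∧
    (α * Δa = θ ^ 2 / 2 →
      ya - Real.sqrt (2 * Δa / α) = ya - θ / α ∧ ya - Δa / θ - θ / (2 * α) = ya - θ / α) := by
  intro θ Δa S
  have h0 : 0 ∈ admissibleCutoffs ba ya θbar α := zero_mem_admissibleCutoffs hba hbya hra hα
  have hα0 := pos_of_mem_admissibleCutoffs hbya h0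
  have hle := isGreatest_admissibleCutoffs_of_le hbya hθ1 h0
  have hge := isGreatest_admissibleCutoffs_of_ge hbya hθ1 h0
  refine ⟨?_, hle, hge, fun h ↦ ⟨?_, ?_⟩⟩
  · split_ifs with h
    · exact hle h
    · exact hge (le_of_not_ge h)
  · rw [sqrt_eq_div_of_mul_eq hθ1 hα0 h]
  · rw [sub_sub, add_eq_div_of_mul_eq hθ1 hα0 h]

/-- Proposition `prop:zp`: for any `α ≥ α̂` (the minimal admissible
    slope), the set of upper cutoffs `x_U ∈ [0, y_a)` for which the lower cutoff exists
    and the terminal rate is at least `θ̄` has a maximum `x̂_U(α)`, equal to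
    `y_a − √(2Δ_a/α)` when `α·Δ_a ≤ θ²/2` and `y_a − Δ_a/θ − θ/(2α)` when
    `α·Δ_a ≥ θ²/2`; in the boundary case both formulas give `y_a − θ/α`. -/
theorem xUHat_isGreatest
    (ba ya θbar α : ℝ)
    (hba : 0 < ba) (hbya : ba < ya)
    (hθ0 : 0 ≤ θbar) (hθ1 : θbar < 1)
    (hra : θbar < ba / ya) (hra1 : ba / ya < 1)
    (hα : (if (1 + θbar) / 2 ≤ ba / ya then 2 * (1 - ba / ya) / ya
      else (1 - θbar) ^ 2 / (2 * (ba - θbar * ya))) ≤ α) :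
    let θ : ℝ := 1 - θbar
    let Δa : ℝ := ya - ba
    let S : Set ℝ := {xU : ℝ | xU ∈ Set.Ico (0:ℝ) ya ∧ 2 * Δa ≤ α * (ya - xU) ^ 2 ∧
      (α * (ya - xU) ≤ θ ∨ 0 ≤ α * (ba - θbar * ya) - α * θ * xU - θ ^ 2 / 2)}
    IsGreatest S (if α * Δa ≤ θ ^ 2 / 2 then ya - Real.sqrt (2 * Δa / α)
      else ya - Δa / θ - θ / (2 * α)) ∧
    (α * Δa ≤ θ ^ 2 / 2 → IsGreatest S (ya - Real.sqrt (2 * Δa / α))) ∧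
    (θ ^ 2 / 2 ≤ α * Δa → IsGreatest S (ya - Δa / θ - θ / (2 * α))) ∧
    (α * Δa = θ ^ 2 / 2 →
      ya - Real.sqrt (2 * Δa / α) = ya - θ / α ∧ ya - Δa / θ - θ / (2 * α) = ya - θ / α) :=
  xUHat_isGreatest_general ba ya θbar α hba hbya hθ1 hra hα
end

section
/- Fix an anchor point (b_a, y_a) with 0 < b_a < y_a, write Δ_a := y_a − b_a and r_a := b_a/y_a, and fix θ̄ ∈ [0,1) with θ := 1 − θ̄ such that θ̄ < r_a < 1. Suppose the parameters are in case II l, i.e., α > 0 satisfies α·Δ_a ≥ θ²/2 and x_U = y_a − Δ_a/θ − θ/(2α), or in case III L, i.e., r_a ≤ (1 + θ̄)/2, α = θ²/(2(b_a − θ̄·y_a)), and x_U = 0. Then the terminal redemption rate r_L := 1 − α(x_L − x_U), where x_L := y_a − √((y_a − x_U)² − 2Δ_a/α), equals θ̄ exactly. -/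
/-
Write `θ = 1 - θ̄` and `Δ = y_a - b_a`. Both cases put the upper cutoff at distance
`d = a + b` below `y_a`, with `a = Δ/θ` and `b = θ/(2α)`; in case III L this is because
`θ/(2α) = (b_a - θ̄ y_a)/θ`, so that `a + b = y_a`. Since `ab = Δ/(2α)`, the radicand
`d² - 2Δ/α` is `(a - b)²`, and `a ≥ b` is exactly `αΔ ≥ θ²/2`. Hence `x_L - x_U = 2b = θ/α`
and `r_L = 1 - θ = θ̄`.
-/

theorem sqrt_add_sq_sub_eq_sub {Δ θ α : ℝ} (hα : 0 < α) (hθ : 0 < θ)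
    (hΔ : θ ^ 2 / 2 ≤ α * Δ) :
    √((Δ / θ + θ / (2 * α)) ^ 2 - 2 * Δ / α) = Δ / θ - θ / (2 * α) := by
  have hab : θ / (2 * α) ≤ Δ / θ := by
    rw [div_le_div_iff₀ (by positivity) hθ]
    nlinarith
  rw [← Real.sqrt_sq (sub_nonneg.mpr hab)]
  congr 1
  field_simp
  ring

theorem one_sub_mul_sub_sqrt_eq_one_sub {y x Δ θ α : ℝ} (hα : 0 < α) (hθ : 0 < θ)
    (hΔ : θ ^ 2 / 2 ≤ α * Δ) (hx : x = y - Δ / θ - θ / (2 * α)) :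
    1 - α * ((y - √((y - x) ^ 2 - 2 * Δ / α)) - x) = 1 - θ := by
  have hyx : y - x = Δ / θ + θ / (2 * α) := by rw [hx]; ring
  rw [show y - √((y - x) ^ 2 - 2 * Δ / α) - x = y - x - √((y - x) ^ 2 - 2 * Δ / α) by ring,
    hyx, sqrt_add_sq_sub_eq_sub hα hθ hΔ]
  field_simp
  ring

theorem rL_eq_thetabar_in_cases_IIl_IIIL_general
    (ba ya θbar α xU : ℝ)
    (hba : 0 < ba) (hbya : ba < ya)
    (hθ1 : θbar < 1)
    (hra : θbar < ba / ya)
    (hcase :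
      (0 < α ∧ (1 - θbar) ^ 2 / 2 ≤ α * (ya - ba) ∧
        xU = ya - (ya - ba) / (1 - θbar) - (1 - θbar) / (2 * α)) ∨
      (ba / ya ≤ (1 + θbar) / 2 ∧ α = (1 - θbar) ^ 2 / (2 * (ba - θbar * ya)) ∧ xU = 0)) :
    1 - α * ((ya - Real.sqrt ((ya - xU) ^ 2 - 2 * (ya - ba) / α)) - xU) = θbar := by
  have hya : 0 < ya := hba.trans hbya
  have hθ : 0 < 1 - θbar := sub_pos.mpr hθ1
  rcases hcase with ⟨hα, hαΔ, hxU⟩ | ⟨hrle, rfl, rfl⟩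
  · rw [one_sub_mul_sub_sqrt_eq_one_sub hα hθ hαΔ hxU, sub_sub_cancel]
  · have hc : 0 < ba - θbar * ya := by
      rw [lt_div_iff₀ hya] at hra
      linarith
    have hcΔ : ba - θbar * ya ≤ ya - ba := by
      rw [div_le_iff₀ hya] at hrle
      linarith
    have hαΔ : (1 - θbar) ^ 2 / 2 ≤ (1 - θbar) ^ 2 / (2 * (ba - θbar * ya)) * (ya - ba) := by
      rw [div_mul_eq_mul_div, le_div_iff₀ (by positivity)]
      nlinarith [sq_pos_of_pos hθ]
    have hxU : (0 : ℝ) = ya - (ya - ba) / (1 - θbar)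
        - (1 - θbar) / (2 * ((1 - θbar) ^ 2 / (2 * (ba - θbar * ya)))) := by
      field_simp
      ring
    rw [one_sub_mul_sub_sqrt_eq_one_sub (by positivity) hθ hαΔ hxU, sub_sub_cancel]

/-- Proposition `prop:HLrm`, second half: in case II l
    (`α·Δ_a ≥ θ²/2` with `x_U = x̂_U^l = y_a − Δ_a/θ − θ/(2α)`) and in case III L
    (`r_a ≤ (1 + θ̄)/2`, `α = α̂_L = θ²/(2(b_a − θ̄·y_a))`, `x_U = 0`), the terminal
    redemption rate `r_L := 1 − α(x_L − x_U)` equals `θ̄` exactly, where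
    `x_L := y_a − √((y_a − x_U)² − 2Δ_a/α)`. -/
theorem rL_eq_thetabar_in_cases_IIl_IIIL
    (ba ya θbar α xU : ℝ)
    (hba : 0 < ba) (hbya : ba < ya)
    (hθ0 : 0 ≤ θbar) (hθ1 : θbar < 1)
    (hra : θbar < ba / ya) (hra1 : ba / ya < 1)
    (hcase :
      (0 < α ∧ (1 - θbar) ^ 2 / 2 ≤ α * (ya - ba) ∧
        xU = ya - (ya - ba) / (1 - θbar) - (1 - θbar) / (2 * α)) ∨
      (ba / ya ≤ (1 + θbar) / 2 ∧ α = (1 - θbar) ^ 2 / (2 * (ba - θbar * ya)) ∧ xU = 0)) :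
    1 - α * ((ya - Real.sqrt ((ya - xU) ^ 2 - 2 * (ya - ba) / α)) - xU) = θbar :=
  rL_eq_thetabar_in_cases_IIl_IIIL_general ba ya θbar α xU hba hbya hθ1 hra hcase
end

section
/- Fix an anchor point (b_a, y_a) with 0 < b_a < y_a, a floor θ̄ ∈ [0,1] with θ := 1 − θ̄, and x_U ∈ [0, y_a). Consider the discrete-decay price curve p(x) := 1 for x ≤ x_U and p(x) := r_U for x > x_U, where r_U := (b_a − x_U)/(y_a − x_U), and let b(x) := b_a − ∫₀ˣ p(t) dt. Then: (1) b(x) = b_a − x for x ≤ x_U and b(x) = b_a − x_U − r_U·(x − x_U) for x ≥ x_U; (2) if x_U < b_a then r_U equals the reserve ratio at x_U, i.e., r_U = b(x_U)/(y_a − x_U), and b(x) > 0 for all x ∈ [0, y_a), whereas if x_U ≥ b_a there exists x ∈ [0, y_a) with b(x) = 0; (3) when x_U < b_a, r_U ≥ θ̄ if and only if b_a/y_a ≥ θ̄ and x_U ≤ (b_a − θ̄·y_a)/θ. -/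
/-!
Integrating the two-piece price gives `b(x) = b_a − x` up to `x_U` and
`b(x) = (b_a − x_U)(y_a − x)/(y_a − x_U)` beyond it: since `r_U` is exactly the reserve ratio at
`x_U`, redeeming at price `r_U` keeps the reserve ratio frozen at `r_U`, so the reserve can only
run out at `y_a` itself, unless `x_U ≥ b_a`, in which case it already runs out at `x = b_a`.
Part (3) is the linear inequality `θ̄ (y_a − x_U) ≤ b_a − x_U`, i.e. `θ x_U ≤ b_a − θ̄ y_a`.
-/

open MeasureTheory

theorem intervalIntegrable_ite_le (c u v a b : ℝ) :
    IntervalIntegrable (fun t : ℝ => if t ≤ c then u else v) volume a b := by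
  rcases le_total u v with huv | hvu
  · refine Monotone.intervalIntegrable fun s t hst => ?_
    by_cases ht : t ≤ c
    · simp [le_trans hst ht, ht]
    · split_ifs <;> simp_all
  · refine Antitone.intervalIntegrable fun s t hst => ?_
    by_cases ht : t ≤ c
    · simp [le_trans hst ht, ht]
    · split_ifs <;> simp_all

section StepFunction

variable {c u v : ℝ}

theorem integral_ite_le_eq_mul {a x : ℝ} (ha : a ≤ c) (hx : x ≤ c) :
    ∫ t in a..x, (if t ≤ c then u else v) = u * (x - a) := by
  have hconst : Set.EqOn (fun t : ℝ => if t ≤ c then u else v) (fun _ => u) (Set.uIcc a x) :=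
    fun t ht => if_pos ((Set.mem_uIcc.mp ht).elim (fun h => h.2.trans hx) (fun h => h.2.trans ha))
  rw [intervalIntegral.integral_congr hconst, intervalIntegral.integral_const, smul_eq_mul,
    mul_comm]

theorem integral_ite_le_eq_add_mul {a x : ℝ} (ha : a ≤ c) (hx : c ≤ x) :
    ∫ t in a..x, (if t ≤ c then u else v) = u * (c - a) + v * (x - c) := by
  have hupper : ∫ t in c..x, (if t ≤ c then u else v) = v * (x - c) := by
    have hconst : ∀ t ∈ Set.uIoc c x, (if t ≤ c then u else v) = v := fun t ht =>
      if_neg (not_le.mpr (Set.uIoc_of_le hx ▸ ht).1)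
    rw [intervalIntegral.integral_congr_ae (Filter.Eventually.of_forall hconst),
      intervalIntegral.integral_const, smul_eq_mul, mul_comm]
  rw [← intervalIntegral.integral_add_adjacent_intervals (intervalIntegrable_ite_le c u v a c)
    (intervalIntegrable_ite_le c u v c x), integral_ite_le_eq_mul ha le_rfl, hupper]

end StepFunction

theorem le_div_sub_iff_le_div_and_le_div {ba ya θbar xU : ℝ} (hbya : ba < ya) (hθ1 : θbar ≤ 1)
    (hxU0 : 0 ≤ xU) (hxUya : xU < ya) :
    θbar ≤ (ba - xU) / (ya - xU) ↔ θbar ≤ ba / ya ∧ xU ≤ (ba - θbar * ya) / (1 - θbar) := by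
  have hya : 0 < ya := hxU0.trans_lt hxUya
  rw [le_div_iff₀ (sub_pos.mpr hxUya), le_div_iff₀ hya]
  rcases hθ1.eq_or_lt with rfl | hθ1
  · constructor
    · intro h; linarith
    · rintro ⟨h, -⟩; linarith
  rw [le_div_iff₀ (sub_pos.mpr hθ1)]
  constructor
  · intro h
    exact ⟨by nlinarith, by linarith⟩
  · rintro ⟨-, h⟩
    linarith

theorem sub_sub_div_mul_sub_eq {ba ya xU : ℝ} (x : ℝ) (hxUya : xU ≠ ya) :
    ba - xU - (ba - xU) / (ya - xU) * (x - xU) = (ba - xU) * (ya - x) / (ya - xU) := by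
  field_simp [sub_ne_zero.mpr hxUya.symm]
  ring

theorem discrete_decay_reserve_general
    (ba ya θbar xU : ℝ)
    (hba : 0 < ba) (hbya : ba < ya)
    (hθ1 : θbar ≤ 1)
    (hxU0 : 0 ≤ xU) (hxUya : xU < ya) :
    let θ : ℝ := 1 - θbar
    let rU : ℝ := (ba - xU) / (ya - xU)
    let p : ℝ → ℝ := fun t => if t ≤ xU then 1 else rU
    let b : ℝ → ℝ := fun x => ba - ∫ t in (0:ℝ)..x, p t
    (∀ x : ℝ, (x ≤ xU → b x = ba - x) ∧ (xU ≤ x → b x = ba - xU - rU * (x - xU))) ∧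
    (xU < ba → rU = b xU / (ya - xU) ∧ ∀ x ∈ Set.Ico (0:ℝ) ya, 0 < b x) ∧
    (ba ≤ xU → ∃ x ∈ Set.Ico (0:ℝ) ya, b x = 0) ∧
    (xU < ba → (θbar ≤ rU ↔ θbar ≤ ba / ya ∧ xU ≤ (ba - θbar * ya) / θ)) := by
  intro θ rU p b
  have hb_low : ∀ x ≤ xU, b x = ba - x := fun x hx => by
    simp only [b, p, integral_ite_le_eq_mul hxU0 hx]
    ring
  have hb_high : ∀ x, xU ≤ x → b x = ba - xU - rU * (x - xU) := fun x hx => by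
    simp only [b, p, integral_ite_le_eq_add_mul hxU0 hx]
    ring
  refine ⟨fun x => ⟨hb_low x, hb_high x⟩, fun hxUba => ⟨by rw [hb_low xU le_rfl], ?_⟩,
    fun hbaxU => ⟨ba, ⟨hba.le, hbya⟩, by rw [hb_low ba hbaxU, sub_self]⟩,
    fun _ => le_div_sub_iff_le_div_and_le_div hbya hθ1 hxU0 hxUya⟩
  rintro x ⟨-, hxya⟩
  rcases le_total x xU with hx | hx
  · rw [hb_low x hx]
    linarith
  · rw [hb_high x hx, sub_sub_div_mul_sub_eq x hxUya.ne]
    exact div_pos (mul_pos (sub_pos.mpr hxUba) (sub_pos.mpr hxya)) (sub_pos.mpr hxUya)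

/-- Lemma `lem:discrete-b`: for the discrete-decay redemption curve
    (price 1 up to `x_U`, then constant `r_U := (b_a − x_U)/(y_a − x_U)`):
    (1) explicit formula for `b(x) = b_a − ∫₀ˣ p`;
    (2) if `x_U < b_a` then `r_U` is the reserve ratio at `x_U` and the reserve is
        never exhausted on `[0, y_a)`, whereas if `x_U ≥ b_a` the reserve is exhausted
        at some `x ∈ [0, y_a)`;
    (3) if `x_U < b_a` then `r_U ≥ θ̄` iff `b_a/y_a ≥ θ̄` and
        `x_U ≤ (b_a − θ̄·y_a)/θ`, where `θ := 1 − θ̄`. -/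
theorem discrete_decay_reserve
    (ba ya θbar xU : ℝ)
    (hba : 0 < ba) (hbya : ba < ya)
    (hθ0 : 0 ≤ θbar) (hθ1 : θbar ≤ 1)
    (hxU0 : 0 ≤ xU) (hxUya : xU < ya) :
    let θ : ℝ := 1 - θbar
    let rU : ℝ := (ba - xU) / (ya - xU)
    let p : ℝ → ℝ := fun t => if t ≤ xU then 1 else rU
    let b : ℝ → ℝ := fun x => ba - ∫ t in (0:ℝ)..x, p t
    (∀ x : ℝ, (x ≤ xU → b x = ba - x) ∧ (xU ≤ x → b x = ba - xU - rU * (x - xU))) ∧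
    (xU < ba → rU = b xU / (ya - xU) ∧ ∀ x ∈ Set.Ico (0:ℝ) ya, 0 < b x) ∧
    (ba ≤ xU → ∃ x ∈ Set.Ico (0:ℝ) ya, b x = 0) ∧
    (xU < ba → (θbar ≤ rU ↔ θbar ≤ ba / ya ∧ xU ≤ (ba - θbar * ya) / θ)) :=
  discrete_decay_reserve_general ba ya θbar xU hba hbya hθ1 hxU0 hxUya
end

section
/- Fix an anchor point (b_a, y_a) with 0 < b_a < y_a, a floor θ̄ ∈ (0,1), and a cap x̄_U ∈ [0, ∞]; write r_a := b_a/y_a and assume r_a ≥ θ̄. Then the set { z ∈ [0, y_a) : z ≤ min(x̄_U, b_a) and (b_a − z)/(y_a − z) ≥ θ̄ } has a maximum, equal to min( x̄_U , y_a·(r_a − θ̄)/(1 − θ̄) ). -/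
lemma core_iff (ba ya θbar z : ℝ) (hθ1 : θbar < 1) (hz : z < ya) :
    (θbar ≤ (ba - z) / (ya - z)) ↔ z * (1 - θbar) ≤ ba - θbar * ya := by
  rw [le_div_iff₀ (by linarith : (0:ℝ) < ya - z)]
  constructor <;> intro h <;> nlinarith

/-- choice of `x_U` for the discrete-decay curve: the set of
    cutoffs `z ∈ [0, y_a)` with `z ≤ min(x̄_U, b_a)` (where `x̄_U ∈ [0,∞]`) and
    `(b_a − z)/(y_a − z) ≥ θ̄` has a maximum, equal to
    `min(x̄_U, y_a·(r_a − θ̄)/(1 − θ̄))` where `r_a := b_a/y_a`. -/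
theorem discrete_decay_xU_isGreatest
    (ba ya θbar : ℝ) (xbarU : EReal)
    (hba : 0 < ba) (hbya : ba < ya)
    (hθ0 : 0 < θbar) (hθ1 : θbar < 1)
    (hxbarU : 0 ≤ xbarU)
    (hra : θbar ≤ ba / ya) :
    IsGreatest
      {z : ℝ | z ∈ Set.Ico (0:ℝ) ya ∧ (z : EReal) ≤ min xbarU ((ba : ℝ) : EReal) ∧
        θbar ≤ (ba - z) / (ya - z)}
      ((min xbarU (((ya * (ba / ya - θbar) / (1 - θbar)) : ℝ) : EReal)).toReal) := by
  have hya : (0:ℝ) < ya := lt_trans hba hbya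
  set m : ℝ := ya * (ba / ya - θbar) / (1 - θbar) with hm
  have h1θ : (0:ℝ) < 1 - θbar := by linarith
  have hmeq : m = (ba - θbar * ya) / (1 - θbar) := by
    rw [hm]; field_simp
  have hra' : θbar * ya ≤ ba := by
    have := (le_div_iff₀ hya).mp hra; linarith
  have hm0 : 0 ≤ m := by
    rw [hmeq]; exact div_nonneg (by linarith) h1θ.le
  have hmba : m ≤ ba := by
    rw [hmeq, div_le_iff₀ h1θ]; nlinarith
  have hmya : m < ya := lt_of_le_of_lt hmba hbya
  have hmul : m * (1 - θbar) = ba - θbar * ya := by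
    rw [hmeq, div_mul_cancel₀ _ h1θ.ne']
  induction xbarU using EReal.rec with
  | bot => simp at hxbarU
  | top =>
    have hmin : min (⊤ : EReal) ((m : ℝ) : EReal) = ((m : ℝ) : EReal) :=
      min_eq_right le_top
    rw [hmin, EReal.toReal_coe]
    constructor
    · refine ⟨⟨hm0, hmya⟩, le_min le_top (EReal.coe_le_coe_iff.mpr hmba), ?_⟩
      exact (core_iff ba ya θbar m hθ1 hmya).mpr hmul.le
    · rintro z ⟨⟨hz0, hzya⟩, hzmin, hzr⟩
      have := (core_iff ba ya θbar z hθ1 hzya).mp hzr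
      rw [← hmul] at this
      nlinarith
  | coe x =>
    have hx0 : (0:ℝ) ≤ x := by exact_mod_cast hxbarU
    have hmin : min ((x:ℝ) : EReal) ((m : ℝ) : EReal) = ((min x m : ℝ) : EReal) :=
      by
      rcases le_total x m with h | h
      · rw [min_eq_left h, min_eq_left (EReal.coe_le_coe_iff.mpr h)]
      · rw [min_eq_right h, min_eq_right (EReal.coe_le_coe_iff.mpr h)]
    rw [hmin, EReal.toReal_coe]
    constructor
    · refine ⟨⟨le_min hx0 hm0, lt_of_le_of_lt (min_le_right x m) hmya⟩,
        le_min (EReal.coe_le_coe_iff.mpr (min_le_left x m))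
          (EReal.coe_le_coe_iff.mpr (le_trans (min_le_right x m) hmba)), ?_⟩
      refine (core_iff ba ya θbar _ hθ1 (lt_of_le_of_lt (min_le_right x m) hmya)).mpr ?_
      rw [← hmul]
      nlinarith [min_le_right x m]
    · rintro z ⟨⟨hz0, hzya⟩, hzmin, hzr⟩
      have hzx : z ≤ x := by
        have := le_trans hzmin (min_le_left _ _)
        exact_mod_cast this
      have hzm : z ≤ m := by
        have := (core_iff ba ya θbar z hθ1 hzya).mp hzr
        rw [← hmul] at this; nlinarith
      exact le_min hzx hzm
end

section
/- Fix normalized static parameters θ̄ ∈ [0,1) (with θ := 1 − θ̄), ᾱ₁ > 0, x̄₁ ∈ [0,∞], and for each anchor supply y_a > 0 set ᾱ := ᾱ₁/y_a and x̄_U := x̄₁·y_a. Let (b_a, y_a) be an anchor point with θ̄·y_a < b_a < y_a and let ζ > 0. Then for every x ∈ [0, y_a], b(ζ·x; ζ·b_a, ζ·y_a) = ζ·b(x; b_a, y_a), where b(·; b_a, y_a) is the reserve value defined by the price curve with dynamic parameters chosen by the selection rule for the respective anchor point. -/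
/- P-AMM redemption curve with the selection rule for dynamic parameters.
   Static parameters: `θbar` (target reserve ratio floor), `αbar` (lower bound
   on the decay slope), `xbarU : EReal` (upper bound on `x_U`, possibly `∞`). -/

noncomputable section

namespace PAMM

/-!
Every selected parameter is homogeneous under `(b_a, y_a, ᾱ, x̄_U) ↦ (ζ b_a, ζ y_a, ᾱ/ζ, ζ x̄_U)`:
the slope `α` scales by `1/ζ` and the cutoffs `x_U`, `x_L` by `ζ`, since `r_a` and `α Δ_a` are
invariant. Hence `p(ζ t) = p(t)` for the scaled curve, and the substitution `t = ζ s` in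
`∫₀^{ζx} p` produces the factor `ζ`.
-/

section Scaling

variable {θbar ζ : ℝ}

lemma alphaHat_mul_left (ba ya : ℝ) (hζ : ζ ≠ 0) :
    alphaHat θbar (ζ * ba) (ζ * ya) = alphaHat θbar ba ya / ζ := by
  unfold alphaHat
  rw [mul_div_mul_left ba ya hζ]
  split_ifs
  · rw [mul_comm ζ ya, ← div_div]
  · rw [show 2 * (ζ * ba - θbar * (ζ * ya)) = 2 * (ba - θbar * ya) * ζ by ring, ← div_div]

lemma alphaSel_mul_left (αbar ba ya : ℝ) (hζ : 0 < ζ) :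
    alphaSel θbar (αbar / ζ) (ζ * ba) (ζ * ya) = alphaSel θbar αbar ba ya / ζ := by
  rw [alphaSel, alphaSel, alphaHat_mul_left ba ya hζ.ne', max_div_div_right hζ.le]

lemma xUHat_mul_left (α ba ya : ℝ) (hζ : 0 < ζ) :
    xUHat θbar (α / ζ) (ζ * ba) (ζ * ya) = ζ * xUHat θbar α ba ya := by
  unfold xUHat
  rw [show α / ζ * (ζ * ya - ζ * ba) = α * (ya - ba) by field_simp]
  split_ifs
  · rw [show 2 * (ζ * ya - ζ * ba) / (α / ζ) = ζ ^ 2 * (2 * (ya - ba) / α) by field_simp,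
      Real.sqrt_mul (sq_nonneg ζ), Real.sqrt_sq hζ.le]
    ring
  · field_simp

lemma _root_.EReal.toReal_min_mul_left (e : EReal) (a : ℝ) (hζ : 0 < ζ) :
    (min ((ζ : EReal) * e) ((ζ * a : ℝ) : EReal)).toReal = ζ * (min e (a : EReal)).toReal := by
  rw [EReal.coe_mul, ← (monotone_mul_left_of_nonneg (EReal.coe_nonneg.2 hζ.le)).map_min,
    EReal.toReal_mul, EReal.toReal_coe]

lemma xUSel_mul_left (αbar : ℝ) (xbarU : EReal) (ba ya : ℝ) (hζ : 0 < ζ) :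
    xUSel θbar (αbar / ζ) ((ζ : EReal) * xbarU) (ζ * ba) (ζ * ya)
      = ζ * xUSel θbar αbar xbarU ba ya := by
  rw [xUSel, xUSel, alphaSel_mul_left αbar ba ya hζ, xUHat_mul_left _ ba ya hζ,
    EReal.toReal_min_mul_left _ _ hζ]

lemma xLSel_mul_left (αbar : ℝ) (xbarU : EReal) (ba ya : ℝ) (hζ : 0 < ζ) :
    xLSel θbar (αbar / ζ) ((ζ : EReal) * xbarU) (ζ * ba) (ζ * ya)
      = ζ * xLSel θbar αbar xbarU ba ya := by
  rw [xLSel, xLSel, alphaSel_mul_left αbar ba ya hζ, xUSel_mul_left αbar xbarU ba ya hζ]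
  set xU := xUSel θbar αbar xbarU ba ya
  set α := alphaSel θbar αbar ba ya
  rw [show (ζ * ya - ζ * xU) ^ 2 - 2 * (ζ * ya - ζ * ba) / (α / ζ)
      = ζ ^ 2 * ((ya - xU) ^ 2 - 2 * (ya - ba) / α) by field_simp,
    Real.sqrt_mul (sq_nonneg ζ), Real.sqrt_sq hζ.le]
  ring

lemma priceCurve_mul_left (α xU xL t : ℝ) (hζ : 0 < ζ) :
    priceCurve (α / ζ) (ζ * xU) (ζ * xL) (ζ * t) = priceCurve α xU xL t := by
  unfold priceCurve
  simp only [mul_le_mul_iff_right₀ hζ]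
  split_ifs
  · rfl
  all_goals field_simp

lemma reserveB_mul_left (αbar : ℝ) (xbarU : EReal) (ba ya x : ℝ) (hζ : 0 < ζ) :
    reserveB θbar (αbar / ζ) ((ζ : EReal) * xbarU) (ζ * ba) (ζ * ya) (ζ * x)
      = ζ * reserveB θbar αbar xbarU ba ya x := by
  rw [reserveB, reserveB, alphaSel_mul_left αbar ba ya hζ, xUSel_mul_left αbar xbarU ba ya hζ,
    xLSel_mul_left αbar xbarU ba ya hζ, mul_sub]
  conv_lhs => rw [← mul_zero ζ, ← intervalIntegral.mul_integral_comp_mul_left]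
  simp only [priceCurve_mul_left _ _ _ _ hζ]

end Scaling

theorem reserve_scaling_general
    (θbar αbar1 ya ba ζ : ℝ) (xbar1 : EReal)
    (hζ : 0 < ζ) :
    ∀ x ∈ Set.Icc (0:ℝ) ya,
      reserveB θbar (αbar1 / (ζ * ya)) (xbar1 * (((ζ * ya : ℝ)) : EReal)) (ζ * ba) (ζ * ya) (ζ * x)
        = ζ * reserveB θbar (αbar1 / ya) (xbar1 * ((ya : ℝ) : EReal)) ba ya x := by
  intro x _
  rw [show αbar1 / (ζ * ya) = αbar1 / ya / ζ by rw [div_div, mul_comm], EReal.coe_mul,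
    mul_left_comm xbar1]
  exact reserveB_mul_left _ _ ba ya x hζ

/-- Lemma `lem:scaling`: with static bounds chosen relative to `y_a`
    (`ᾱ = ᾱ₁/y_a`, `x̄_U = x̄₁·y_a`), the reserve value scales:
    `b(ζx; ζb_a, ζy_a) = ζ·b(x; b_a, y_a)`. -/
theorem reserve_scaling
    (θbar αbar1 ya ba ζ : ℝ) (xbar1 : EReal)
    (hθ0 : 0 ≤ θbar) (hθ1 : θbar < 1) (hαbar1 : 0 < αbar1) (hxbar1 : 0 ≤ xbar1)
    (hya : 0 < ya) (hba0 : θbar * ya < ba) (hbaya : ba < ya) (hζ : 0 < ζ) :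
    ∀ x ∈ Set.Icc (0:ℝ) ya,
      reserveB θbar (αbar1 / (ζ * ya)) (xbar1 * (((ζ * ya : ℝ)) : EReal)) (ζ * ba) (ζ * ya) (ζ * x)
        = ζ * reserveB θbar (αbar1 / ya) (xbar1 * ((ya : ℝ) : EReal)) ba ya x :=
  reserve_scaling_general θbar αbar1 ya ba ζ xbar1 hζ

end PAMM
end
end

section
/- Fix normalized static parameters θ̄ ∈ [0,1) (with θ := 1 − θ̄), ᾱ₁ > 0, x̄₁ ∈ [0,∞], and for each anchor supply y_a > 0 set ᾱ := ᾱ₁/y_a and x̄_U := x̄₁·y_a. Given x ∈ [0, y_a], a reserve value b, and y_a > 0, suppose b_{a,1} with θ̄ < b_{a,1} < 1 satisfies b(x/y_a; b_{a,1}, 1) = b/y_a. Then b_a := b_{a,1}·y_a satisfies b(x; b_a, y_a) = b; i.e., reconstruction of the anchor reserve value can be carried out entirely in the space normalized to anchor supply 1. -/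
/- P-AMM redemption curve with the selection rule for dynamic parameters.
   Static parameters: `θbar` (target reserve ratio floor), `αbar` (lower bound
   on the decay slope), `xbarU : EReal` (upper bound on `x_U`, possibly `∞`). -/

noncomputable section

namespace PAMM

lemma alphaHat_scale (θbar ba1 ya : ℝ) (hya : 0 < ya) :
    alphaHat θbar (ba1 * ya) ya = alphaHat θbar ba1 1 / ya := by
  unfold alphaHat
  rw [mul_div_cancel_right₀ _ hya.ne', div_one]
  split_ifs with h
  · rw [div_one]
  · rw [div_div]; ring_nf

lemma alphaSel_scale (θbar αbar1 ba1 ya : ℝ) (hya : 0 < ya) :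
    alphaSel θbar (αbar1 / ya) (ba1 * ya) ya = alphaSel θbar αbar1 ba1 1 / ya := by
  unfold alphaSel
  rw [alphaHat_scale θbar ba1 ya hya, max_div_div_right hya.le]

lemma xUHat_scale (θbar α ba1 ya : ℝ) (hya : 0 < ya) :
    xUHat θbar (α / ya) (ba1 * ya) ya = ya * xUHat θbar α ba1 1 := by
  unfold xUHat
  have hc : α / ya * (ya - ba1 * ya) = α * (1 - ba1) := by
    field_simp
  rw [hc]
  split_ifs with h
  · have h2 : 2 * (ya - ba1 * ya) / (α / ya) = ya ^ 2 * (2 * (1 - ba1) / α) := by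
      rw [div_div_eq_mul_div]; ring
    rw [h2, Real.sqrt_mul (sq_nonneg ya), Real.sqrt_sq hya.le]
    ring
  · have h3 : (ya - ba1 * ya) / (1 - θbar) = ya * ((1 - ba1) / (1 - θbar)) := by
      rw [mul_div_assoc']; ring_nf
    have h4 : (1 - θbar) / (2 * (α / ya)) = ya * ((1 - θbar) / (2 * α)) := by
      rw [show 2 * (α / ya) = 2 * α / ya by ring, div_div_eq_mul_div]; ring
    rw [h3, h4]; ring

lemma coe_min' (a b : ℝ) : ((min a b : ℝ) : EReal) = min (a : EReal) (b : EReal) := by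
  rcases le_total a b with h | h
  · rw [min_eq_left h, min_eq_left (EReal.coe_le_coe_iff.mpr h)]
  · rw [min_eq_right h, min_eq_right (EReal.coe_le_coe_iff.mpr h)]

lemma xUSel_scale (θbar αbar1 ba1 ya : ℝ) (xbar1 : EReal) (hya : 0 < ya)
    (hxbar1 : 0 ≤ xbar1) :
    xUSel θbar (αbar1 / ya) (xbar1 * ((ya : ℝ) : EReal)) (ba1 * ya) ya
      = ya * xUSel θbar (αbar1 / 1) (xbar1 * (((1:ℝ)) : EReal)) ba1 1 := by
  have hα : alphaSel θbar (αbar1 / ya) (ba1 * ya) ya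
      = alphaSel θbar (αbar1 / 1) ba1 1 / ya := by
    rw [div_one, alphaSel_scale θbar αbar1 ba1 ya hya]
  set xU1 : ℝ := xUHat θbar (alphaSel θbar (αbar1 / 1) ba1 1) ba1 1 with hxU1
  have hscale : xUHat θbar (alphaSel θbar (αbar1 / ya) (ba1 * ya) ya) (ba1 * ya) ya
      = ya * xU1 := by
    rw [hα, xUHat_scale _ _ _ _ hya]
  unfold xUSel
  rw [hscale, ← hxU1, EReal.coe_one, mul_one]
  induction xbar1 using EReal.rec with
  | bot => simp at hxbar1
  | top =>
      rw [EReal.top_mul_coe_of_pos hya, min_eq_right le_top, min_eq_right le_top,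
        EReal.toReal_coe, EReal.toReal_coe]
  | coe r =>
      rw [← EReal.coe_mul, ← coe_min', ← coe_min', EReal.toReal_coe, EReal.toReal_coe,
        mul_comm r ya, mul_min_of_nonneg _ _ hya.le]

lemma xLSel_scale (θbar αbar1 ba1 ya : ℝ) (xbar1 : EReal) (hya : 0 < ya)
    (hxbar1 : 0 ≤ xbar1) :
    xLSel θbar (αbar1 / ya) (xbar1 * ((ya : ℝ) : EReal)) (ba1 * ya) ya
      = ya * xLSel θbar (αbar1 / 1) (xbar1 * (((1:ℝ)) : EReal)) ba1 1 := by
  have hα : alphaSel θbar (αbar1 / ya) (ba1 * ya) ya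
      = alphaSel θbar (αbar1 / 1) ba1 1 / ya := by
    rw [div_one, alphaSel_scale θbar αbar1 ba1 ya hya]
  unfold xLSel
  rw [hα, xUSel_scale θbar αbar1 ba1 ya xbar1 hya hxbar1]
  set xU1 := xUSel θbar (αbar1 / 1) (xbar1 * (((1:ℝ)) : EReal)) ba1 1
  set α1 := alphaSel θbar (αbar1 / 1) ba1 1
  have h2 : (ya - ya * xU1) ^ 2 - 2 * (ya - ba1 * ya) / (α1 / ya)
      = ya ^ 2 * ((1 - xU1) ^ 2 - 2 * (1 - ba1) / α1) := by
    rw [div_div_eq_mul_div]; ring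
  rw [h2, Real.sqrt_mul (sq_nonneg ya), Real.sqrt_sq hya.le]
  ring

lemma priceCurve_scale (α xU xL ya t : ℝ) (hya : 0 < ya) :
    priceCurve (α / ya) (ya * xU) (ya * xL) t = priceCurve α xU xL (t / ya) := by
  unfold priceCurve
  have hU : (t / ya ≤ xU) = (t ≤ ya * xU) := by rw [div_le_iff₀ hya, mul_comm]
  have hL : (t / ya ≤ xL) = (t ≤ ya * xL) := by rw [div_le_iff₀ hya, mul_comm]
  simp only [hU, hL]
  split_ifs with h1 h2
  · rfl
  · have : α / ya * (t - ya * xU) = α * (t / ya - xU) := by field_simp; try ring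
    rw [this]
  · have : α / ya * (ya * xL - ya * xU) = α * (xL - xU) := by field_simp; try ring
    rw [this]

/-- Theorem `thm:normalization`: reconstruction of the anchor reserve
    value can be carried out in the space normalized to anchor supply 1. With static
    bounds chosen relative to `y_a` (`ᾱ = ᾱ₁/y_a`, `x̄_U = x̄₁·y_a`), if `b_{a,1}` solves
    the normalized equation `b(x/y_a; b_{a,1}, 1) = b/y_a`, then `b_a := b_{a,1}·y_a`
    satisfies `b(x; b_a, y_a) = b`. -/
theorem reserve_normalization
    (θbar αbar1 ya x b ba1 : ℝ) (xbar1 : EReal)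
    (hθ0 : 0 ≤ θbar) (hθ1 : θbar < 1) (hαbar1 : 0 < αbar1) (hxbar1 : 0 ≤ xbar1)
    (hya : 0 < ya) (hx0 : 0 ≤ x) (hxya : x ≤ ya)
    (hba1l : θbar < ba1) (hba1u : ba1 < 1)
    (hnorm : reserveB θbar (αbar1 / 1) (xbar1 * (((1:ℝ)) : EReal)) ba1 1 (x / ya) = b / ya) :
    reserveB θbar (αbar1 / ya) (xbar1 * ((ya : ℝ) : EReal)) (ba1 * ya) ya x = b := by
  have hα : alphaSel θbar (αbar1 / ya) (ba1 * ya) ya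
      = alphaSel θbar (αbar1 / 1) ba1 1 / ya := by
    rw [div_one, alphaSel_scale θbar αbar1 ba1 ya hya]
  unfold reserveB
  rw [hα, xUSel_scale θbar αbar1 ba1 ya xbar1 hya hxbar1,
    xLSel_scale θbar αbar1 ba1 ya xbar1 hya hxbar1]
  set α1 := alphaSel θbar (αbar1 / 1) ba1 1
  set xU1 := xUSel θbar (αbar1 / 1) (xbar1 * (((1:ℝ)) : EReal)) ba1 1
  set xL1 := xLSel θbar (αbar1 / 1) (xbar1 * (((1:ℝ)) : EReal)) ba1 1
  have hfun : ∀ t : ℝ, priceCurve (α1 / ya) (ya * xU1) (ya * xL1) t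
      = priceCurve α1 xU1 xL1 (t / ya) := fun t => priceCurve_scale α1 xU1 xL1 ya t hya
  simp only [hfun]
  rw [intervalIntegral.integral_comp_div _ hya.ne', zero_div, smul_eq_mul]
  have hnorm' : ba1 - ∫ t in (0:ℝ)..(x / ya), priceCurve α1 xU1 xL1 t = b / ya := by
    unfold reserveB at hnorm
    exact hnorm
  have : (ba1 - ∫ t in (0:ℝ)..(x / ya), priceCurve α1 xU1 xL1 t) * ya = b := by
    rw [hnorm', div_mul_cancel₀ _ hya.ne']
  linarith [this]

end PAMM
end
end
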